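/- arXiv:1406.2843 — 7 statements merged into one kernel-verified Lean document; each statement's English description precedes it below -/
import Mathlib

section
/- If f is a polynomial of degree at most n with real coefficients all of whose complex zeros lie outside the open unit disk (i.e., every root z satisfies |z| ≥ 1), then either f or -f can be written in the form Σ_{j=0}^n a_j (1-x)^j (x+1)^{n-j} with all coefficients a_j ≥ 0. -/
/-!
The nonnegative combinations of `(1 - x) ^ j * (x + 1) ^ (n - j)`, `j ≤ n`, form a convex cone
`B_n` with `B_n * B_m ⊆ B_(n+m)`, and `B_k ⊆ B_n` for `k ≤ n` because
`1 = ((1 - x) + (x + 1)) / 2`. Over `ℝ`, a polynomial without zeros in the open unit disk is a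
constant times a product of factors `x - r` with `|r| ≥ 1` and `x ^ 2 - 2 Re z x + |z| ^ 2` with
`|z| ≥ 1`; each of these lies, up to sign, in `B_1` resp. `B_2`.
-/

open Finset Polynomial

noncomputable def lorentzBasis (n j : ℕ) : ℝ[X] := (1 - X) ^ j * (X + 1) ^ (n - j)

/-- The cone `B_n(-1, 1)`. -/
noncomputable def lorentzCone (n : ℕ) : PointedCone ℝ ℝ[X] :=
  PointedCone.hull ℝ (Set.range fun j : Fin (n + 1) => lorentzBasis n j)

lemma lorentzBasis_mem_lorentzCone {n j : ℕ} (hj : j ≤ n) : lorentzBasis n j ∈ lorentzCone n :=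
  PointedCone.subset_hull ⟨⟨j, Nat.lt_succ_of_le hj⟩, rfl⟩

lemma smul_lorentzBasis_mem_lorentzCone {n j : ℕ} {a : ℝ} (ha : 0 ≤ a) (hj : j ≤ n) :
    a • lorentzBasis n j ∈ lorentzCone n :=
  PointedCone.smul_mem _ ha (lorentzBasis_mem_lorentzCone hj)

lemma lorentzBasis_mul_lorentzBasis {n m i j : ℕ} (hi : i ≤ n) (hj : j ≤ m) :
    lorentzBasis n i * lorentzBasis m j = lorentzBasis (n + m) (i + j) := by
  rw [lorentzBasis, lorentzBasis, lorentzBasis, show n + m - (i + j) = (n - i) + (m - j) by omega,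
    pow_add, pow_add]
  ring

lemma mul_mem_lorentzCone {n m : ℕ} {p q : ℝ[X]} (hp : p ∈ lorentzCone n)
    (hq : q ∈ lorentzCone m) : p * q ∈ lorentzCone (n + m) := by
  induction hp using Submodule.span_induction with
  | mem p hp =>
    obtain ⟨i, rfl⟩ := hp
    induction hq using Submodule.span_induction with
    | mem q hq =>
      obtain ⟨j, rfl⟩ := hq
      rw [lorentzBasis_mul_lorentzBasis i.is_le j.is_le]
      exact lorentzBasis_mem_lorentzCone (by omega)
    | zero => simp
    | add q q' _ _ hq hq' => rw [mul_add]; exact add_mem hq hq'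
    | smul c q _ hq => rw [mul_smul_comm]; exact Submodule.smul_mem _ c hq
  | zero => simp
  | add p p' _ _ hp hp' => rw [add_mul]; exact add_mem hp hp'
  | smul c p _ hp => rw [smul_mul_assoc]; exact Submodule.smul_mem _ c hp

lemma one_mem_lorentzCone (n : ℕ) : (1 : ℝ[X]) ∈ lorentzCone n := by
  induction n with
  | zero => simpa [lorentzBasis] using lorentzBasis_mem_lorentzCone (le_refl 0)
  | succ n ih =>
    have hone : (1 : ℝ[X]) = (1 / 2 : ℝ) • lorentzBasis 1 0 + (1 / 2 : ℝ) • lorentzBasis 1 1 := by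
      apply Polynomial.funext; intro x; simp [lorentzBasis]; ring
    have h1_mem : (1 : ℝ[X]) ∈ lorentzCone 1 := by
      rw [hone]
      exact add_mem (smul_lorentzBasis_mem_lorentzCone (by norm_num) zero_le_one)
        (smul_lorentzBasis_mem_lorentzCone (by norm_num) le_rfl)
    simpa using mul_mem_lorentzCone ih h1_mem

lemma lorentzCone_mono {k n : ℕ} (hkn : k ≤ n) : lorentzCone k ≤ lorentzCone n := fun p hp => by
  simpa [Nat.add_sub_cancel' hkn] using mul_mem_lorentzCone hp (one_mem_lorentzCone (n - k))

lemma exists_nonneg_eval_eq_sum_of_mem_lorentzCone {n : ℕ} {p : ℝ[X]} (hp : p ∈ lorentzCone n) :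
    ∃ A : ℕ → ℝ, (∀ j ≤ n, 0 ≤ A j) ∧
      ∀ x : ℝ, p.eval x = ∑ j ∈ range (n + 1), A j * (1 - x) ^ j * (x + 1) ^ (n - j) := by
  obtain ⟨c, rfl⟩ := (Submodule.mem_span_range_iff_exists_fun _).mp hp
  refine ⟨fun j => if h : j < n + 1 then c ⟨j, h⟩ else 0, fun j _ => ?_, fun x => ?_⟩
  · dsimp only; split_ifs <;> simp [(c _).2]
  · rw [← Fin.sum_univ_eq_sum_range]
    simp [eval_finsetSum, lorentzBasis, mul_assoc, ← Nonneg.coe_smul, Fin.is_le]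

lemma mul_mem_lorentzCone_or_neg {n m : ℕ} {p q : ℝ[X]}
    (hp : p ∈ lorentzCone n ∨ -p ∈ lorentzCone n) (hq : q ∈ lorentzCone m ∨ -q ∈ lorentzCone m) :
    p * q ∈ lorentzCone (n + m) ∨ -(p * q) ∈ lorentzCone (n + m) := by
  rcases hp with hp | hp <;> rcases hq with hq | hq
  · exact .inl (mul_mem_lorentzCone hp hq)
  · exact .inr (by simpa using mul_mem_lorentzCone hp hq)
  · exact .inr (by simpa using mul_mem_lorentzCone hp hq)
  · exact .inl (by simpa using mul_mem_lorentzCone hp hq)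

lemma C_mem_lorentzCone_or_neg (a : ℝ) (n : ℕ) :
    C a ∈ lorentzCone n ∨ -C a ∈ lorentzCone n := by
  rcases le_total 0 a with ha | ha
  · exact .inl (by simpa [smul_eq_C_mul] using PointedCone.smul_mem _ ha (one_mem_lorentzCone n))
  · exact .inr (by simpa [smul_eq_C_mul] using
      PointedCone.smul_mem _ (neg_nonneg.mpr ha) (one_mem_lorentzCone n))

lemma X_sub_C_mem_lorentzCone_or_neg {r : ℝ} (hr : 1 ≤ |r|) :
    X - C r ∈ lorentzCone 1 ∨ -(X - C r) ∈ lorentzCone 1 := by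
  rcases le_abs'.mp hr with hr | hr
  · have : X - C r = ((1 - r) / 2) • lorentzBasis 1 0 + ((-r - 1) / 2) • lorentzBasis 1 1 := by
      apply Polynomial.funext; intro x; simp [lorentzBasis]; ring
    rw [this]
    exact .inl (add_mem (smul_lorentzBasis_mem_lorentzCone (by linarith) zero_le_one)
      (smul_lorentzBasis_mem_lorentzCone (by linarith) le_rfl))
  · have : -(X - C r) = ((r - 1) / 2) • lorentzBasis 1 0 + ((r + 1) / 2) • lorentzBasis 1 1 := by
      apply Polynomial.funext; intro x; simp [lorentzBasis]; ring
    rw [this]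
    exact .inr (add_mem (smul_lorentzBasis_mem_lorentzCone (by linarith) zero_le_one)
      (smul_lorentzBasis_mem_lorentzCone (by linarith) le_rfl))

lemma quadratic_mem_lorentzCone {b c : ℝ} (hc : 1 ≤ c) (hbc : b ^ 2 ≤ c) :
    X ^ 2 - C (2 * b) * X + C c ∈ lorentzCone 2 := by
  have : X ^ 2 - C (2 * b) * X + C c = ((1 + c - 2 * b) / 4) • lorentzBasis 2 0 +
      ((c - 1) / 2) • lorentzBasis 2 1 + ((1 + c + 2 * b) / 4) • lorentzBasis 2 2 := by
    apply Polynomial.funext; intro x; simp [lorentzBasis]; ring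
  rw [this]
  refine add_mem (add_mem (smul_lorentzBasis_mem_lorentzCone ?_ zero_le_two)
    (smul_lorentzBasis_mem_lorentzCone ?_ one_le_two)) (smul_lorentzBasis_mem_lorentzCone ?_ le_rfl)
  -- `1 + c ∓ 2 * b ≥ 1 + b ^ 2 ∓ 2 * b = (1 ∓ b) ^ 2`
  all_goals nlinarith [sq_nonneg (1 - b), sq_nonneg (1 + b)]

lemma exists_dvd_mem_lorentzCone_or_neg {f : ℝ[X]} {z : ℂ} (hz : aeval z f = 0)
    (hz1 : 1 ≤ ‖z‖) : ∃ q : ℝ[X], q ∣ f ∧ 0 < q.natDegree ∧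
      (q ∈ lorentzCone q.natDegree ∨ -q ∈ lorentzCone q.natDegree) := by
  by_cases him : z.im = 0
  · have hzr : (z.re : ℂ) = z := Complex.ext rfl (by simp [him])
    refine ⟨X - C z.re, dvd_iff_isRoot.mpr ?_, by simp, ?_⟩
    · rw [← hzr, ← Complex.coe_algebraMap, aeval_algebraMap_apply] at hz
      simpa using hz
    · rw [natDegree_X_sub_C]
      refine X_sub_C_mem_lorentzCone_or_neg ?_
      rwa [← Real.norm_eq_abs, ← Complex.norm_real, hzr]
  · have hdeg : (X ^ 2 - C (2 * z.re) * X + C (‖z‖ ^ 2)).natDegree = 2 := by compute_degree!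
    refine ⟨_, quadratic_dvd_of_aeval_eq_zero_im_ne_zero f hz him, by omega, .inl ?_⟩
    rw [hdeg]
    refine quadratic_mem_lorentzCone (one_le_pow₀ hz1) ?_
    rw [← sq_abs]
    exact pow_le_pow_left₀ (abs_nonneg _) (Complex.abs_re_le_norm z) 2

theorem mem_lorentzCone_or_neg_of_forall_aeval_eq_zero_one_le_norm (f : ℝ[X])
    (hroots : ∀ z : ℂ, aeval z f = 0 → 1 ≤ ‖z‖) :
    f ∈ lorentzCone f.natDegree ∨ -f ∈ lorentzCone f.natDegree := by
  induction h : f.natDegree using Nat.strong_induction_on generalizing f with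
  | _ N ih =>
  rw [← h]
  rcases Nat.eq_zero_or_pos f.natDegree with h0 | hpos
  · rw [h0, eq_C_of_natDegree_eq_zero h0]
    exact C_mem_lorentzCone_or_neg _ _
  · obtain ⟨z, hz⟩ :=
      IsAlgClosed.exists_aeval_eq_zero ℂ f (natDegree_pos_iff_degree_pos.mp hpos).ne'
    obtain ⟨q, ⟨g, rfl⟩, hq_pos, hq⟩ := exists_dvd_mem_lorentzCone_or_neg hz (hroots z hz)
    have hqg : q * g ≠ 0 := ne_zero_of_natDegree_gt hpos
    have hdeg := natDegree_mul (left_ne_zero_of_mul hqg) (right_ne_zero_of_mul hqg)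
    have hg := ih g.natDegree (by omega) g (fun w hw => hroots w (by simp [hw])) rfl
    rw [hdeg]
    exact mul_mem_lorentzCone_or_neg hq hg

theorem lorentz_rep_of_no_zeros_in_unit_disk (n : ℕ) (f : Polynomial ℝ)
    (hdeg : f.natDegree ≤ n)
    (hroots : ∀ z : ℂ, Polynomial.aeval z f = 0 → 1 ≤ ‖z‖) :
    (∃ A : ℕ → ℝ, (∀ j ≤ n, 0 ≤ A j) ∧
      ∀ x : ℝ, f.eval x = ∑ j ∈ range (n + 1), A j * (1 - x) ^ j * (x + 1) ^ (n - j)) ∨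
    (∃ A : ℕ → ℝ, (∀ j ≤ n, 0 ≤ A j) ∧
      ∀ x : ℝ, -f.eval x = ∑ j ∈ range (n + 1), A j * (1 - x) ^ j * (x + 1) ^ (n - j)) := by
  rcases mem_lorentzCone_or_neg_of_forall_aeval_eq_zero_one_le_norm f hroots with hf | hf
  · exact .inl (exists_nonneg_eval_eq_sum_of_mem_lorentzCone (lorentzCone_mono hdeg hf))
  · exact .inr (by
      simpa using exists_nonneg_eval_eq_sum_of_mem_lorentzCone (lorentzCone_mono hdeg hf))
end

section
/- Let a < b be real numbers, d a nonnegative integer, and q > 0. If f(x) = Σ_{j=0}^d a_j (b-x)^j (x-a)^{d-j} with all a_j ≥ 0, then max{f(a), f(b)}^q ≤ ((qd+1)/(b-a)) ∫_a^b f(x)^q dx. -/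
open Finset

/-!
Keeping only the term `j = 0` (resp. `j = d`) of the Lorentz representation gives
`f x ≥ A₀ (x - a)^d` (resp. `f x ≥ A_d (b - x)^d`) on `[a, b]`, while `f b = A₀ (b - a)^d`
(resp. `f a = A_d (b - a)^d`). Integrating the `q`-th power of this monomial minorant gives
exactly `(b - a) / (q d + 1)` times the `q`-th power of its value at the endpoint.
-/

def lorentzPoly (a b : ℝ) (d : ℕ) (A : ℕ → ℝ) (x : ℝ) : ℝ :=
  ∑ j ∈ range (d + 1), A j * (b - x) ^ j * (x - a) ^ (d - j)

namespace lorentzPoly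

variable {a b : ℝ} {d : ℕ} {A : ℕ → ℝ}

theorem continuous : Continuous (lorentzPoly a b d A) := by
  unfold lorentzPoly
  fun_prop

theorem apply_left : lorentzPoly a b d A a = A d * (b - a) ^ d := by
  rw [lorentzPoly, sum_eq_single d]
  · simp
  · intro j hj hjd
    have hlt : j < d := lt_of_le_of_ne (Nat.lt_succ_iff.mp (mem_range.mp hj)) hjd
    simp [zero_pow (Nat.sub_ne_zero_of_lt hlt)]
  · simp

theorem apply_right : lorentzPoly a b d A b = A 0 * (b - a) ^ d := by
  rw [lorentzPoly, sum_eq_single 0]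
  · simp
  · intro j _ hj0
    simp [zero_pow hj0]
  · simp

theorem term_le (hA : ∀ j ≤ d, 0 ≤ A j) {x : ℝ} (hx : x ∈ Set.Icc a b) {j : ℕ} (hj : j ≤ d) :
    A j * (b - x) ^ j * (x - a) ^ (d - j) ≤ lorentzPoly a b d A x := by
  refine single_le_sum (f := fun i => A i * (b - x) ^ i * (x - a) ^ (d - i))
    (fun i hi => ?_) (mem_range_succ_iff.mpr hj)
  have := hA i (mem_range_succ_iff.mp hi)
  have hbx : 0 ≤ b - x := by linarith [hx.2]
  have hxa : 0 ≤ x - a := by linarith [hx.1]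
  positivity

end lorentzPoly

theorem integral_mul_sub_pow_rpow {a b : ℝ} (hab : a ≤ b) (d : ℕ) {q : ℝ} (hq : 0 ≤ q)
    {c : ℝ} (hc : 0 ≤ c) :
    ∫ x in a..b, (c * (x - a) ^ d) ^ q = (b - a) * (c * (b - a) ^ d) ^ q / (q * d + 1) := by
  have hqd : 0 ≤ q * d := by positivity
  have hsplit : ∀ t : ℝ, 0 ≤ t → (c * t ^ d) ^ q = c ^ q * t ^ (q * d) := fun t ht => by
    rw [Real.mul_rpow hc (by positivity), ← Real.rpow_natCast, ← Real.rpow_mul ht, mul_comm q]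
  have hintegrand : Set.EqOn (fun x => (c * (x - a) ^ d) ^ q)
      (fun x => c ^ q * (x - a) ^ (q * d)) (Set.uIcc a b) := fun x hx => by
    rw [Set.uIcc_of_le hab] at hx
    exact hsplit _ (sub_nonneg.mpr hx.1)
  rw [intervalIntegral.integral_congr hintegrand, intervalIntegral.integral_const_mul,
    intervalIntegral.integral_comp_sub_right (fun x => x ^ (q * d)), sub_self,
    integral_rpow (Or.inl (by linarith)), Real.zero_rpow (by linarith), sub_zero,
    Real.rpow_add_one' (sub_nonneg.mpr hab) (by linarith), hsplit _ (sub_nonneg.mpr hab)]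
  ring

theorem rpow_mul_pow_le_integral_of_mul_sub_pow_le {a b : ℝ} (hab : a < b) {d : ℕ} {q : ℝ}
    (hq : 0 ≤ q) {c : ℝ} (hc : 0 ≤ c) {g : ℝ → ℝ}
    (hg : IntervalIntegrable (fun x => g x ^ q) MeasureTheory.volume a b)
    (hle : ∀ x ∈ Set.Icc a b, c * (x - a) ^ d ≤ g x) :
    (c * (b - a) ^ d) ^ q ≤ (q * d + 1) / (b - a) * ∫ x in a..b, g x ^ q := by
  have hba : 0 < b - a := sub_pos.mpr hab
  have hqd : 0 < q * d + 1 := by positivity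
  have hmono : ∫ x in a..b, (c * (x - a) ^ d) ^ q ≤ ∫ x in a..b, g x ^ q := by
    refine intervalIntegral.integral_mono_on hab.le ?_ hg fun x hx => ?_
    · exact (Continuous.rpow_const (by fun_prop) fun _ => Or.inr hq).intervalIntegrable a b
    · have hxa : 0 ≤ x - a := sub_nonneg.mpr hx.1
      exact Real.rpow_le_rpow (by positivity) (hle x hx) hq
  calc (c * (b - a) ^ d) ^ q
      = (q * d + 1) / (b - a) * ∫ x in a..b, (c * (x - a) ^ d) ^ q := by
        rw [integral_mul_sub_pow_rpow hab.le d hq hc]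
        field_simp
    _ ≤ (q * d + 1) / (b - a) * ∫ x in a..b, g x ^ q := by gcongr

theorem rpow_mul_pow_le_integral_of_mul_pow_sub_le {a b : ℝ} (hab : a < b) {d : ℕ} {q : ℝ}
    (hq : 0 ≤ q) {c : ℝ} (hc : 0 ≤ c) {g : ℝ → ℝ}
    (hg : IntervalIntegrable (fun x => g x ^ q) MeasureTheory.volume a b)
    (hle : ∀ x ∈ Set.Icc a b, c * (b - x) ^ d ≤ g x) :
    (c * (b - a) ^ d) ^ q ≤ (q * d + 1) / (b - a) * ∫ x in a..b, g x ^ q := by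
  have hreflect : ∫ x in a..b, g (a + b - x) ^ q = ∫ x in a..b, g x ^ q := by
    simpa using intervalIntegral.integral_comp_sub_left (fun x => g x ^ q) (a + b) (a := a) (b := b)
  rw [← hreflect]
  refine rpow_mul_pow_le_integral_of_mul_sub_pow_le hab hq hc ?_ fun x hx => ?_
  · simpa using hg.symm.comp_sub_left (a + b)
  · have := hle (a + b - x) ⟨by linarith [hx.2], by linarith [hx.1]⟩
    rwa [show b - (a + b - x) = x - a by ring] at this

theorem endpoint_nikolskii (a b : ℝ) (hab : a < b) (d : ℕ) (q : ℝ) (hq : 0 < q)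
    (f : ℝ → ℝ) (A : ℕ → ℝ) (hA : ∀ j ≤ d, 0 ≤ A j)
    (hf : ∀ x : ℝ, f x = ∑ j ∈ range (d + 1), A j * (b - x) ^ j * (x - a) ^ (d - j)) :
    (max (f a) (f b)) ^ q ≤ ((q * d + 1) / (b - a)) * ∫ x in a..b, f x ^ q := by
  obtain rfl : f = lorentzPoly a b d A := funext hf
  have hint : IntervalIntegrable (fun x => lorentzPoly a b d A x ^ q) MeasureTheory.volume a b :=
    (lorentzPoly.continuous.rpow_const fun _ => Or.inr hq.le).intervalIntegrable a b
  rcases max_cases (lorentzPoly a b d A a) (lorentzPoly a b d A b) with ⟨hmax, -⟩ | ⟨hmax, -⟩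
  · rw [hmax, lorentzPoly.apply_left]
    refine rpow_mul_pow_le_integral_of_mul_pow_sub_le hab hq.le (hA d le_rfl) hint fun x hx => ?_
    simpa using lorentzPoly.term_le hA hx le_rfl
  · rw [hmax, lorentzPoly.apply_right]
    refine rpow_mul_pow_le_integral_of_mul_sub_pow_le hab hq.le (hA 0 d.zero_le) hint fun x hx => ?_
    simpa using lorentzPoly.term_le hA hx d.zero_le
end

section
/- Let n be a positive integer and 0 < q < p < ∞. If f is a real polynomial of degree at most n with no zeros in the open unit disk of ℂ, then (∫_{-1}^1 |f(x)|^p dx)^{1/p} ≤ ((qn+1)/2)^{1/q - 1/p} (∫_{-1}^1 |f(x)|^q dx)^{1/q}. -/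
/-!
For a root `z` with `‖z‖ ≥ 1`, the ratio `‖t - z‖ / (1 + t)` is nonincreasing on `(-1, 1]`;
multiplying over the roots, `|f t| / (1 + t) ^ n` is nonincreasing, and symmetrically
`|f t| / (1 - t) ^ n` is nondecreasing. Comparing `|f|^q` on `[-1, y]` and on `[y, 1]` with
these weights gives `|f y|^q ≤ (q n + 1) / 2 * ∫ |f|^q`, and then
`∫ |f|^p ≤ ‖f‖_∞^(p - q) ∫ |f|^q` yields the inequality.
-/

open Polynomial
open MeasureTheory Set

theorem norm_sub_mul_one_add_le {z : ℂ} (hz : 1 ≤ ‖z‖) {x y : ℝ} (hx : -1 ≤ x) (hxy : x ≤ y)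
    (hy : y ≤ 1) : ‖(y : ℂ) - z‖ * (1 + x) ≤ ‖(x : ℂ) - z‖ * (1 + y) := by
  have hnorm (t : ℝ) : ‖(t : ℂ) - z‖ ^ 2 = (t - z.re) ^ 2 + z.im ^ 2 := by
    rw [Complex.sq_norm, Complex.normSq_apply]
    simp only [Complex.sub_re, Complex.ofReal_re, Complex.sub_im, Complex.ofReal_im]
    ring
  have hz2 : 1 ≤ z.re ^ 2 + z.im ^ 2 := by
    rw [sq, sq, ← Complex.normSq_apply, ← Complex.sq_norm]
    exact one_le_pow₀ hz
  refine le_of_pow_le_pow_left₀ two_ne_zero (mul_nonneg (norm_nonneg _) (by linarith)) ?_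
  set c := 1 + z.re
  have hfactor : ‖(x : ℂ) - z‖ ^ 2 * (1 + y) ^ 2 - ‖(y : ℂ) - z‖ ^ 2 * (1 + x) ^ 2 =
      (y - x) * ((c ^ 2 + z.im ^ 2) * ((1 + x) + (1 + y)) - 2 * c * (1 + x) * (1 + y)) := by
    rw [hnorm, hnorm]; ring
  -- `‖z‖ ≥ 1` reads `c ^ 2 + im z ^ 2 ≥ 2 c`, and `u + v ≥ u v` for `u = 1 + x, v = 1 + y ∈ [0, 2]`
  have hbracket : 0 ≤ (c ^ 2 + z.im ^ 2) * ((1 + x) + (1 + y)) - 2 * c * (1 + x) * (1 + y) := by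
    rcases le_or_gt c 0 with hc | hc
    · nlinarith [mul_nonneg (mul_nonneg (neg_nonneg.2 hc) (by linarith : 0 ≤ 1 + x))
        (by linarith : 0 ≤ 1 + y)]
    · nlinarith [mul_nonneg hc.le (by nlinarith : 0 ≤ (1 + x) + (1 + y) - (1 + x) * (1 + y))]
  rw [mul_pow, mul_pow, ← sub_nonneg, hfactor]
  exact mul_nonneg (sub_nonneg.2 hxy) hbracket

theorem norm_eval_eq_norm_leadingCoeff_mul_prod_roots (F : ℂ[X]) (w : ℂ) :
    ‖F.eval w‖ = ‖F.leadingCoeff‖ * (F.roots.map fun z => ‖w - z‖).prod := by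
  rw [(IsAlgClosed.splits F).eval_eq_prod_roots, norm_mul]
  congr 1
  exact (map_multiset_prod (normHom (α := ℂ)) _).trans (by rw [Multiset.map_map]; rfl)

theorem norm_eval_mul_one_add_pow_le {F : ℂ[X]} {n : ℕ} (hdeg : F.natDegree ≤ n)
    (hroots : ∀ z, F.eval z = 0 → 1 ≤ ‖z‖) {x y : ℝ} (hx : -1 ≤ x) (hxy : x ≤ y) (hy : y ≤ 1) :
    ‖F.eval (y : ℂ)‖ * (1 + x) ^ n ≤ ‖F.eval (x : ℂ)‖ * (1 + y) ^ n := by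
  obtain ⟨k, rfl⟩ := Nat.exists_eq_add_of_le ((card_roots' F).trans hdeg)
  have hweight (w c : ℝ) : ‖F.eval (w : ℂ)‖ * c ^ (Multiset.card F.roots + k) =
      ‖F.leadingCoeff‖ * ((F.roots.map fun z => ‖(w : ℂ) - z‖ * c).prod * c ^ k) := by
    rw [norm_eval_eq_norm_leadingCoeff_mul_prod_roots, Multiset.prod_map_mul,
      Multiset.map_const', Multiset.prod_replicate, pow_add]
    ring
  have hx' : 0 ≤ 1 + x := by linarith
  have hy' : 0 ≤ 1 + y := by linarith
  rw [hweight, hweight]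
  refine mul_le_mul_of_nonneg_left (mul_le_mul ?_ (pow_le_pow_left₀ hx' (by linarith) k)
    (by positivity) (Multiset.prod_nonneg fun _ h => ?_)) (norm_nonneg _)
  · exact Multiset.prod_map_le_prod_map₀ _ _ (fun _ _ => by positivity)
      fun z hz => norm_sub_mul_one_add_le (hroots z (isRoot_of_mem_roots hz)) hx hxy hy
  · obtain ⟨z, -, rfl⟩ := Multiset.mem_map.1 h
    positivity

theorem norm_eval_mul_one_sub_pow_le {F : ℂ[X]} {n : ℕ} (hdeg : F.natDegree ≤ n)
    (hroots : ∀ z, F.eval z = 0 → 1 ≤ ‖z‖) {x y : ℝ} (hy : -1 ≤ y) (hyx : y ≤ x) (hx : x ≤ 1) :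
    ‖F.eval (y : ℂ)‖ * (1 - x) ^ n ≤ ‖F.eval (x : ℂ)‖ * (1 - y) ^ n := by
  have hdeg' : (F.comp (-X)).natDegree ≤ n := by simpa [natDegree_comp] using hdeg
  have hroots' (z : ℂ) (hz : (F.comp (-X)).eval z = 0) : 1 ≤ ‖z‖ := by
    simpa using hroots (-z) (by simpa using hz)
  simpa [sub_eq_add_neg] using norm_eval_mul_one_add_pow_le hdeg' hroots'
    (neg_le_neg hx) (neg_le_neg hyx) (neg_le.1 hy)

theorem rpow_mul_rpow_le_of_mul_pow_le {u v s t q : ℝ} {n : ℕ} (hu : 0 ≤ u) (hv : 0 ≤ v)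
    (hs : 0 ≤ s) (ht : 0 ≤ t) (hq : 0 ≤ q) (h : u * s ^ n ≤ v * t ^ n) :
    u ^ q * s ^ (q * n) ≤ v ^ q * t ^ (q * n) := by
  have := Real.rpow_le_rpow (by positivity) h hq
  rwa [Real.mul_rpow hu (by positivity), Real.mul_rpow hv (by positivity),
    ← Real.rpow_natCast_mul hs, ← Real.rpow_natCast_mul ht, mul_comm (n : ℝ)] at this

theorem intervalIntegral_sub_rpow {a y r : ℝ} (hr : 0 ≤ r) :
    ∫ x in a..y, (x - a) ^ r = (y - a) ^ (r + 1) / (r + 1) := by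
  rw [intervalIntegral.integral_comp_sub_right (· ^ r), sub_self,
    integral_rpow (Or.inl (by linarith)), Real.zero_rpow (by positivity), sub_zero]

theorem mul_sub_div_le_intervalIntegral {g : ℝ → ℝ} {a y r : ℝ} (hr : 0 ≤ r) (hay : a ≤ y)
    (hg : IntervalIntegrable g volume a y)
    (hmono : ∀ x ∈ Icc a y, g y * (x - a) ^ r ≤ g x * (y - a) ^ r) :
    g y * (y - a) / (r + 1) ≤ ∫ x in a..y, g x := by
  rcases hay.eq_or_lt with rfl | hay
  · simp
  have hpos : 0 < (y - a) ^ r := Real.rpow_pos_of_pos (sub_pos.2 hay) r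
  have hint : ∫ x in a..y, g y * (x - a) ^ r ≤ ∫ x in a..y, g x * (y - a) ^ r :=
    intervalIntegral.integral_mono_on hay.le
      (((continuous_id.sub continuous_const).rpow_const fun _ => Or.inr hr).intervalIntegrable
        _ _ |>.const_mul _) (hg.mul_const _) hmono
  rw [intervalIntegral.integral_const_mul, intervalIntegral.integral_mul_const,
    intervalIntegral_sub_rpow hr, Real.rpow_add_one (sub_pos.2 hay).ne'] at hint
  refine le_of_mul_le_mul_right ?_ hpos
  calc g y * (y - a) / (r + 1) * (y - a) ^ r = g y * ((y - a) ^ r * (y - a) / (r + 1)) := by ring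
    _ ≤ _ := hint

theorem mul_sub_div_le_intervalIntegral_of_mem_Icc {g : ℝ → ℝ} {a b y r : ℝ} (hr : 0 ≤ r)
    (hy : y ∈ Icc a b) (hg : IntervalIntegrable g volume a b)
    (hleft : ∀ x ∈ Icc a y, g y * (x - a) ^ r ≤ g x * (y - a) ^ r)
    (hright : ∀ x ∈ Icc y b, g y * (b - x) ^ r ≤ g x * (b - y) ^ r) :
    g y * (b - a) / (r + 1) ≤ ∫ x in a..b, g x := by
  have hgl : IntervalIntegrable g volume a y :=
    hg.mono_set (uIcc_subset_uIcc left_mem_uIcc (mem_uIcc_of_le hy.1 hy.2))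
  have hgr : IntervalIntegrable g volume y b :=
    hg.mono_set (uIcc_subset_uIcc (mem_uIcc_of_le hy.1 hy.2) right_mem_uIcc)
  have hl := mul_sub_div_le_intervalIntegral hr hy.1 hgl hleft
  have hr := mul_sub_div_le_intervalIntegral (g := fun x => g (-x)) (a := -b) (y := -y) hr
    (neg_le_neg hy.2) ((IntervalIntegrable.iff_comp_neg (f := g)).mp hgr.symm) fun x hx => by
      convert hright (-x) ⟨le_neg_of_le_neg hx.2, neg_le.1 hx.1⟩ using 3 <;> ring_nf
  simp only [neg_neg, intervalIntegral.integral_comp_neg] at hr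
  rw [← intervalIntegral.integral_add_adjacent_intervals hgl hgr]
  calc g y * (b - a) / (r + 1) = g y * (y - a) / (r + 1) + g y * (-y - -b) / (r + 1) := by ring
    _ ≤ _ := add_le_add hl hr

theorem abs_eval_rpow_le_mul_intervalIntegral {f : ℝ[X]} {n : ℕ} (hdeg : f.natDegree ≤ n)
    (hroots : ∀ z : ℂ, aeval z f = 0 → 1 ≤ ‖z‖) {q y : ℝ} (hq : 0 < q) (hy : y ∈ Icc (-1) 1) :
    |f.eval y| ^ q ≤ (q * n + 1) / 2 * ∫ x in (-1 : ℝ)..1, |f.eval x| ^ q := by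
  set F := f.map (algebraMap ℝ ℂ)
  have habs (t : ℝ) : |f.eval t| = ‖F.eval (t : ℂ)‖ := by
    rw [eval_map_algebraMap, ← Complex.coe_algebraMap, aeval_algebraMap_apply, coe_aeval_eq_eval,
      Complex.coe_algebraMap, Complex.norm_real, Real.norm_eq_abs]
  have hFdeg : F.natDegree ≤ n := natDegree_map_le.trans hdeg
  have hFroots (z : ℂ) (hz : F.eval z = 0) : 1 ≤ ‖z‖ :=
    hroots z (by rwa [eval_map_algebraMap] at hz)
  have key := mul_sub_div_le_intervalIntegral_of_mem_Icc (g := fun x => |f.eval x| ^ q)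
    (r := q * n) (by positivity) hy
    ((f.continuous.abs.rpow_const fun _ => Or.inr hq.le).intervalIntegrable _ _)
    (fun x hx => by
      rw [sub_neg_eq_add, sub_neg_eq_add, add_comm x, add_comm y, habs, habs]
      exact rpow_mul_rpow_le_of_mul_pow_le (norm_nonneg _) (norm_nonneg _) (by linarith [hx.1])
        (by linarith [hy.1]) hq.le (norm_eval_mul_one_add_pow_le hFdeg hFroots hx.1 hx.2 hy.2))
    (fun x hx => by
      rw [habs, habs]
      exact rpow_mul_rpow_le_of_mul_pow_le (norm_nonneg _) (norm_nonneg _) (by linarith [hx.2])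
        (by linarith [hy.2]) hq.le (norm_eval_mul_one_sub_pow_le hFdeg hFroots hy.1 hx.1 hx.2))
  rw [sub_neg_eq_add, one_add_one_eq_two] at key
  calc |f.eval y| ^ q = (q * n + 1) / 2 * (|f.eval y| ^ q * 2 / (q * n + 1)) := by field_simp
    _ ≤ _ := by gcongr

theorem intervalIntegral_abs_rpow_le_of_abs_le {g : ℝ → ℝ} {a b M p q : ℝ} (hab : a ≤ b)
    (hg : ContinuousOn g (Icc a b)) (hq : 0 < q) (hqp : q ≤ p) (hM : ∀ y ∈ Icc a b, |g y| ≤ M) :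
    ∫ x in a..b, |g x| ^ p ≤ M ^ (p - q) * ∫ x in a..b, |g x| ^ q := by
  have hint (s : ℝ) (hs : 0 ≤ s) : IntervalIntegrable (fun x => |g x| ^ s) volume a b :=
    ContinuousOn.intervalIntegrable
      (by rw [uIcc_of_le hab]; exact hg.abs.rpow_const fun _ _ => Or.inr hs)
  rw [← intervalIntegral.integral_const_mul]
  refine intervalIntegral.integral_mono_on hab (hint p (by linarith))
    ((hint q hq.le).const_mul _) fun y hy => ?_
  calc |g y| ^ p = |g y| ^ (p - q) * |g y| ^ q := by
        rw [← Real.rpow_add' (abs_nonneg _) (by linarith), sub_add_cancel]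
    _ ≤ M ^ (p - q) * |g y| ^ q :=
        mul_le_mul_of_nonneg_right (Real.rpow_le_rpow (abs_nonneg _) (hM y hy) (by linarith))
          (by positivity)

theorem rpow_intervalIntegral_le_of_rpow_le_mul_intervalIntegral {g : ℝ → ℝ} {a b A p q : ℝ}
    (hab : a ≤ b) (hg : ContinuousOn g (Icc a b)) (hq : 0 < q) (hqp : q ≤ p) (hA : 0 ≤ A)
    (hbound : ∀ y ∈ Icc a b, |g y| ^ q ≤ A * ∫ x in a..b, |g x| ^ q) :
    (∫ x in a..b, |g x| ^ p) ^ (1 / p) ≤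
      A ^ (1 / q - 1 / p) * (∫ x in a..b, |g x| ^ q) ^ (1 / q) := by
  set I := ∫ x in a..b, |g x| ^ q
  have hp : 0 < p := hq.trans_le hqp
  have hI : 0 ≤ I := intervalIntegral.integral_nonneg hab fun _ _ => by positivity
  have hsup (y : ℝ) (hy : y ∈ Icc a b) : |g y| ≤ (A * I) ^ q⁻¹ := by
    calc |g y| = (|g y| ^ q) ^ q⁻¹ := (Real.rpow_rpow_inv (abs_nonneg _) hq.ne').symm
      _ ≤ (A * I) ^ q⁻¹ := Real.rpow_le_rpow (by positivity) (hbound y hy) (by positivity)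
  calc (∫ x in a..b, |g x| ^ p) ^ (1 / p) ≤ (((A * I) ^ q⁻¹) ^ (p - q) * I) ^ (1 / p) :=
        Real.rpow_le_rpow (intervalIntegral.integral_nonneg hab fun _ _ => by positivity)
          (intervalIntegral_abs_rpow_le_of_abs_le hab hg hq hqp hsup) (by positivity)
    _ = A ^ (1 / q - 1 / p) * I ^ (1 / q) := by
        rw [← Real.rpow_mul (by positivity), Real.mul_rpow hA hI, mul_assoc,
          ← Real.rpow_add_one' hI
            (by nlinarith [mul_nonneg (inv_nonneg.2 hq.le) (sub_nonneg.2 hqp)]),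
          Real.mul_rpow (by positivity) (by positivity), ← Real.rpow_mul hA, ← Real.rpow_mul hI]
        congr 2
        · field_simp
        · field_simp; ring

theorem nikolskii_constrained_general (n : ℕ) (p q : ℝ) (hq : 0 < q) (hqp : q < p)
    (f : Polynomial ℝ) (hdeg : f.natDegree ≤ n)
    (hroots : ∀ z : ℂ, Polynomial.aeval z f = 0 → 1 ≤ ‖z‖) :
    (∫ x in (-1 : ℝ)..1, |f.eval x| ^ p) ^ (1 / p) ≤
      ((q * n + 1) / 2) ^ (1 / q - 1 / p) * (∫ x in (-1 : ℝ)..1, |f.eval x| ^ q) ^ (1 / q) :=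
  rpow_intervalIntegral_le_of_rpow_le_mul_intervalIntegral (by norm_num) f.continuous.continuousOn
    hq hqp.le (by positivity) fun _ hy => abs_eval_rpow_le_mul_intervalIntegral hdeg hroots hq hy

theorem nikolskii_constrained (n : ℕ) (hn : 0 < n) (p q : ℝ) (hq : 0 < q) (hqp : q < p)
    (f : Polynomial ℝ) (hdeg : f.natDegree ≤ n)
    (hroots : ∀ z : ℂ, Polynomial.aeval z f = 0 → 1 ≤ ‖z‖) :
    (∫ x in (-1 : ℝ)..1, |f.eval x| ^ p) ^ (1 / p) ≤
      ((q * n + 1) / 2) ^ (1 / q - 1 / p) * (∫ x in (-1 : ℝ)..1, |f.eval x| ^ q) ^ (1 / q) :=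
  nikolskii_constrained_general n p q hq hqp f hdeg hroots
end

section
/- Let n be a positive integer and q > 0. If f is a real polynomial of degree at most n with no zeros in the open unit disk of ℂ, then max_{x ∈ [-1,1]} |f(x)| ≤ ((qn+1)/2)^{1/q} (∫_{-1}^1 |f(x)|^q dx)^{1/q}. -/
/-!
If every zero `z` of `f` has `|z| ≥ 1`, then each factor `|x - z| / (x + 1)` is nonincreasing on
`(-1, 1]`, hence so is `|f(x)| / (x + 1)ⁿ` for `n ≥ deg f`. So for `x ∈ [-1, 1]` the polynomial
satisfies `|f(y)| ≥ |f(x)| ((y + 1) / (x + 1))ⁿ` on `[-1, x]` and, applying this to `f(-X)`,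
`|f(y)| ≥ |f(x)| ((1 - y) / (1 - x))ⁿ` on `[x, 1]`. Integrating the `q`-th powers of these bounds
gives `∫₋₁¹ |f|^q ≥ |f(x)|^q (x + 1 + 1 - x) / (nq + 1)`.
-/

open Polynomial Set intervalIntegral

def NoZerosInUnitDisk (f : ℝ[X]) : Prop := ∀ z : ℂ, aeval z f = 0 → 1 ≤ ‖z‖

lemma norm_ofReal_sub_mul_add_one_le {z : ℂ} (hz : 1 ≤ ‖z‖) {x y : ℝ} (hy : -1 ≤ y)
    (hyx : y ≤ x) (hx : x ≤ 1) : ‖(x : ℂ) - z‖ * (y + 1) ≤ ‖(y : ℂ) - z‖ * (x + 1) := by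
  refine le_of_pow_le_pow_left₀ two_ne_zero (mul_nonneg (norm_nonneg _) (by linarith)) ?_
  simp only [mul_pow, Complex.sq_norm, Complex.normSq_apply, Complex.sub_re, Complex.sub_im,
    Complex.ofReal_re, Complex.ofReal_im, ← sq]
  set a := z.re
  set b := z.im
  have hab : 1 ≤ a ^ 2 + b ^ 2 := by
    simpa [Complex.sq_norm, Complex.normSq_apply, ← sq] using pow_le_pow_left₀ zero_le_one hz 2
  have hR : 2 * (a + 1) ≤ (a + 1) ^ 2 + b ^ 2 := by linarith
  have huv : (x + 1) * (y + 1) ≤ (x + 1) + (y + 1) := by nlinarith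
  -- With `u = x + 1`, `v = y + 1` and `R = |z + 1|²`, the right side minus the left side is
  -- `(x - y) * (R * (u + v) - 2 * (a + 1) * u * v)`; `|z| ≥ 1` enters only as `R ≥ 2 * (a + 1)`.
  have key : 2 * (a + 1) * ((x + 1) * (y + 1)) ≤ ((a + 1) ^ 2 + b ^ 2) * ((x + 1) + (y + 1)) :=
    (mul_le_mul_of_nonneg_right hR (mul_nonneg (by linarith) (by linarith))).trans
      (mul_le_mul_of_nonneg_left huv (by positivity))
  nlinarith [mul_le_mul_of_nonneg_left key (sub_nonneg.2 hyx)]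

lemma abs_eval_mul_add_one_pow_le {f : ℝ[X]} (hf : NoZerosInUnitDisk f) {x y : ℝ}
    (hy : -1 ≤ y) (hyx : y ≤ x) (hx : x ≤ 1) :
    |f.eval x| * (y + 1) ^ f.natDegree ≤ |f.eval y| * (x + 1) ^ f.natDegree := by
  set F := f.map (algebraMap ℝ ℂ)
  have hsplit : F.Splits := IsAlgClosed.splits F
  have hcard : F.roots.card = f.natDegree := by
    rw [← natDegree_map (algebraMap ℝ ℂ), splits_iff_card_roots.1 hsplit]
  have habs (t c : ℝ) : |f.eval t| * c ^ f.natDegree =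
      ‖F.leadingCoeff‖ * (F.roots.map fun z => ‖(t : ℂ) - z‖ * c).prod := by
    have heval : ((f.eval t : ℝ) : ℂ) = F.eval (t : ℂ) := by
      rw [eval_map_algebraMap]; exact ofReal_eval f t
    rw [← Real.norm_eq_abs, ← Complex.norm_real, heval, hsplit.eval_eq_prod_roots,
      Multiset.prod_map_mul, Multiset.map_const', Multiset.prod_replicate, hcard, norm_mul,
      show ∀ m : Multiset ℂ, ‖m.prod‖ = (m.map (‖·‖)).prod from map_multiset_prod normHom,
      Multiset.map_map]
    simp only [Function.comp_apply, mul_assoc]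
  rw [habs, habs]
  have hroot {z : ℂ} (hz : z ∈ F.roots) : 1 ≤ ‖z‖ :=
    hf z (by rw [aeval_def, eval₂_eq_eval_map]; exact (mem_roots'.1 hz).2)
  refine mul_le_mul_of_nonneg_left (Multiset.prod_map_le_prod_map₀ _ _ ?_ ?_) (norm_nonneg _)
  · exact fun _ _ => mul_nonneg (norm_nonneg _) (by linarith)
  · exact fun z hz => norm_ofReal_sub_mul_add_one_le (hroot hz) hy hyx hx

lemma abs_eval_mul_add_one_pow_le_of_natDegree_le {f : ℝ[X]} (hf : NoZerosInUnitDisk f) {n : ℕ}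
    (hdeg : f.natDegree ≤ n) {x y : ℝ} (hy : -1 ≤ y) (hyx : y ≤ x) (hx : x ≤ 1) :
    |f.eval x| * (y + 1) ^ n ≤ |f.eval y| * (x + 1) ^ n := by
  obtain ⟨k, rfl⟩ := Nat.exists_eq_add_of_le hdeg
  have hy' : 0 ≤ y + 1 := by linarith
  rw [pow_add, pow_add, ← mul_assoc, ← mul_assoc]
  exact mul_le_mul (abs_eval_mul_add_one_pow_le hf hy hyx hx) (by gcongr) (by positivity)
    (mul_nonneg (abs_nonneg _) (pow_nonneg (by linarith) _))

lemma NoZerosInUnitDisk.comp_neg_X {f : ℝ[X]} (hf : NoZerosInUnitDisk f) :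
    NoZerosInUnitDisk (f.comp (-X)) := by
  intro z hz
  rw [aeval_comp] at hz
  simpa using hf _ hz

lemma integral_sub_div_rpow {a b p : ℝ} (hab : a < b) (hp : -1 < p) :
    ∫ y in a..b, ((y - a) / (b - a)) ^ p = (b - a) / (p + 1) := by
  rw [integral_comp_sub_right (fun u => (u / (b - a)) ^ p), sub_self,
    integral_comp_div (fun u => u ^ p) (sub_ne_zero.2 hab.ne'), zero_div,
    div_self (sub_ne_zero.2 hab.ne'),
    integral_rpow (Or.inl hp), Real.one_rpow, Real.zero_rpow (by linarith), smul_eq_mul]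
  ring

lemma rpow_abs_eval_mul_le_integral_left {f : ℝ[X]} (hf : NoZerosInUnitDisk f) {n : ℕ}
    (hdeg : f.natDegree ≤ n) {q : ℝ} (hq : 0 < q) {x : ℝ} (hx₁ : -1 ≤ x) (hx : x ≤ 1) :
    |f.eval x| ^ q * ((x + 1) / (n * q + 1)) ≤ ∫ y in (-1)..x, |f.eval y| ^ q := by
  rcases hx₁.eq_or_lt with rfl | hx₁
  · simp
  have hx₀ : 0 < x + 1 := by linarith
  have hpt : ∀ y ∈ Icc (-1) x,
      |f.eval x| ^ q * ((y - -1) / (x - -1)) ^ (n * q) ≤ |f.eval y| ^ q := by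
    rintro y ⟨hy, hyx⟩
    simp only [sub_neg_eq_add]
    have hr : 0 ≤ (y + 1) / (x + 1) := div_nonneg (by linarith) hx₀.le
    have hpow : |f.eval x| * ((y + 1) / (x + 1)) ^ n ≤ |f.eval y| := by
      rw [div_pow, mul_div_assoc', div_le_iff₀ (by positivity)]
      exact abs_eval_mul_add_one_pow_le_of_natDegree_le hf hdeg hy hyx hx
    calc |f.eval x| ^ q * ((y + 1) / (x + 1)) ^ (n * q)
        = (|f.eval x| * ((y + 1) / (x + 1)) ^ n) ^ q := by
          rw [Real.mul_rpow (abs_nonneg _) (by positivity), ← Real.rpow_natCast,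
            ← Real.rpow_mul hr]
      _ ≤ |f.eval y| ^ q := by gcongr
  have hcont : Continuous fun y => |f.eval x| ^ q * ((y - -1) / (x - -1)) ^ (n * q) :=
    continuous_const.mul (((continuous_id.sub continuous_const).div_const _).rpow_const
      fun _ => Or.inr (by positivity))
  calc |f.eval x| ^ q * ((x + 1) / (n * q + 1))
      = ∫ y in (-1)..x, |f.eval x| ^ q * ((y - -1) / (x - -1)) ^ (n * q) := by
        rw [integral_const_mul, integral_sub_div_rpow (by linarith)
          (neg_one_lt_zero.trans_le (by positivity)), sub_neg_eq_add]
    _ ≤ ∫ y in (-1)..x, |f.eval y| ^ q :=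
        integral_mono_on hx₁.le (hcont.intervalIntegrable _ _)
          ((f.continuous.abs.rpow_const fun _ => Or.inr hq.le).intervalIntegrable _ _) hpt

lemma rpow_abs_eval_mul_le_integral {f : ℝ[X]} (hf : NoZerosInUnitDisk f) {n : ℕ}
    (hdeg : f.natDegree ≤ n) {q : ℝ} (hq : 0 < q) {x : ℝ} (hx : x ∈ Icc (-1) 1) :
    |f.eval x| ^ q * (2 / (n * q + 1)) ≤ ∫ y in (-1)..1, |f.eval y| ^ q := by
  have hint (a b : ℝ) : IntervalIntegrable (fun y => |f.eval y| ^ q) MeasureTheory.volume a b :=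
    (f.continuous.abs.rpow_const fun _ => Or.inr hq.le).intervalIntegrable _ _
  have hleft := rpow_abs_eval_mul_le_integral_left hf hdeg hq hx.1 hx.2
  have hright := rpow_abs_eval_mul_le_integral_left hf.comp_neg_X (n := n)
    (by rwa [natDegree_comp, natDegree_neg, natDegree_X, mul_one]) hq (x := -x)
    (by linarith [hx.2]) (by linarith [hx.1])
  simp only [eval_comp, eval_neg, eval_X, neg_neg] at hright
  rw [integral_comp_neg (fun y => |f.eval y| ^ q), neg_neg, neg_neg] at hright
  rw [← integral_add_adjacent_intervals (hint (-1) x) (hint x 1)]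
  calc |f.eval x| ^ q * (2 / (n * q + 1))
      = |f.eval x| ^ q * ((x + 1) / (n * q + 1))
          + |f.eval x| ^ q * ((-x + 1) / (n * q + 1)) := by ring
    _ ≤ _ := add_le_add hleft hright

lemma abs_eval_le_integral_rpow {f : ℝ[X]} (hf : NoZerosInUnitDisk f) {n : ℕ}
    (hdeg : f.natDegree ≤ n) {q : ℝ} (hq : 0 < q) {x : ℝ} (hx : x ∈ Icc (-1) 1) :
    |f.eval x| ≤ ((q * n + 1) / 2) ^ (1 / q) * (∫ y in (-1)..1, |f.eval y| ^ q) ^ (1 / q) := by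
  have h := rpow_abs_eval_mul_le_integral hf hdeg hq hx
  have hI : 0 ≤ ∫ y in (-1)..1, |f.eval y| ^ q := le_trans (by positivity) h
  rw [← Real.mul_rpow (by positivity) hI, one_div, Real.le_rpow_inv_iff_of_pos (abs_nonneg _)
    (by positivity) hq]
  calc |f.eval x| ^ q = |f.eval x| ^ q * (2 / (n * q + 1)) * ((q * n + 1) / 2) := by
        field_simp
    _ ≤ (∫ y in (-1)..1, |f.eval y| ^ q) * ((q * n + 1) / 2) := by gcongr
    _ = _ := mul_comm _ _

theorem nikolskii_constrained_sup_general (n : ℕ) (q : ℝ) (hq : 0 < q)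
    (f : Polynomial ℝ) (hdeg : f.natDegree ≤ n)
    (hroots : ∀ z : ℂ, Polynomial.aeval z f = 0 → 1 ≤ ‖z‖) :
    (⨆ x : Set.Icc (-1 : ℝ) 1, |f.eval (x : ℝ)|) ≤
      ((q * n + 1) / 2) ^ (1 / q) * (∫ x in (-1 : ℝ)..1, |f.eval (x : ℝ)| ^ q) ^ (1 / q) := by
  have : Nonempty (Icc (-1 : ℝ) 1) := ⟨⟨0, by norm_num⟩⟩
  exact ciSup_le fun x => abs_eval_le_integral_rpow hroots hdeg hq x.2

theorem nikolskii_constrained_sup (n : ℕ) (hn : 0 < n) (q : ℝ) (hq : 0 < q)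
    (f : Polynomial ℝ) (hdeg : f.natDegree ≤ n)
    (hroots : ∀ z : ℂ, Polynomial.aeval z f = 0 → 1 ≤ ‖z‖) :
    (⨆ x : Set.Icc (-1 : ℝ) 1, |f.eval (x : ℝ)|) ≤
      ((q * n + 1) / 2) ^ (1 / q) * (∫ x in (-1 : ℝ)..1, |f.eval (x : ℝ)| ^ q) ^ (1 / q) :=
  nikolskii_constrained_sup_general n q hq f hdeg hroots
end

section
/- Let d be a positive integer and let f be a real polynomial of degree at most d such that f'(x) = Σ_{j=0}^{d-1} a_j (1-x)^j (x+1)^{d-1-j} with all a_j ≥ 0. Then max_{x ∈ [-1,1]} |f'(x)| ≤ (d/2)(f(1) - f(-1)) ≤ d · max_{x ∈ [-1,1]} |f(x)|. -/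
/-!
On `[-1, 1]` the term `C(n, j) (1 - x)^j (x + 1)^(n - j)` of the binomial expansion of
`((1 - x) + (x + 1))^n = 2^n` is at most `2^n`, while its integral over `[-1, 1]` equals
`2^(n + 1) / (n + 1)` (integration by parts). So every basis polynomial of degree `n = d - 1` is
bounded by `d / 2` times its integral, and with nonnegative coefficients this gives
`0 ≤ f' ≤ (d / 2) ∫ f' = (d / 2) (f 1 - f (-1))` on `[-1, 1]`. The second inequality is just
`f 1 - f (-1) ≤ 2 max |f|`.
-/

open Finset Polynomial

theorem choose_mul_pow_mul_pow_le_add_pow {R : Type*} [CommSemiring R] [PartialOrder R]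
    [IsOrderedRing R] {a b : R} (ha : 0 ≤ a) (hb : 0 ≤ b) (j m : ℕ) :
    ((j + m).choose j : R) * a ^ j * b ^ m ≤ (a + b) ^ (j + m) := by
  have hterm : a ^ j * b ^ (j + m - j) * ((j + m).choose j : R) ≤ (a + b) ^ (j + m) := by
    rw [add_pow]
    exact single_le_sum (f := fun i => a ^ i * b ^ (j + m - i) * ((j + m).choose i : R))
      (fun i _ => by positivity) (mem_range.mpr (by omega))
  simpa [mul_comm, mul_left_comm, mul_assoc] using hterm

theorem integral_one_sub_pow_mul_add_one_pow (j m : ℕ) :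
    ∫ x in (-1 : ℝ)..1, (1 - x) ^ j * (x + 1) ^ m =
      2 ^ (j + m + 1) / ((j + m + 1) * (j + m).choose j) := by
  induction j generalizing m with
  | zero =>
    simp only [pow_zero, one_mul, zero_add, Nat.choose_zero_right, Nat.cast_one, mul_one]
    rw [intervalIntegral.integral_comp_add_right (fun x => x ^ m), integral_pow]
    norm_num
  | succ j ih =>
    -- Integration by parts trades a factor `1 - x` for a factor `x + 1`; the boundary terms vanish.
    have hu : ∀ x ∈ Set.uIcc (-1 : ℝ) 1,
        HasDerivAt (fun x => (1 - x) ^ (j + 1)) (-((j + 1) * (1 - x) ^ j)) x := fun x _ =>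
      (((hasDerivAt_id' x).const_sub 1).fun_pow (j + 1)).congr_deriv (by push_cast; ring)
    have hv : ∀ x ∈ Set.uIcc (-1 : ℝ) 1,
        HasDerivAt (fun x : ℝ => (x + 1) ^ (m + 1) / (m + 1)) ((x + 1) ^ m) x := fun x _ =>
      ((((hasDerivAt_id' x).add_const 1).fun_pow (m + 1)).div_const ((m : ℝ) + 1)).congr_deriv
        (by push_cast; field_simp)
    rw [intervalIntegral.integral_mul_deriv_eq_deriv_mul hu hv
      (Continuous.intervalIntegrable (by fun_prop) _ _)
      (Continuous.intervalIntegrable (by fun_prop) _ _)]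
    have hchoose : ((j + 1 + m).choose (j + 1) : ℝ) * (j + 1) = (j + 1 + m).choose j * (m + 1) := by
      have h := Nat.choose_succ_right_eq (j + 1 + m) j
      rw [show j + 1 + m - j = m + 1 by omega] at h
      exact_mod_cast h
    have hc₀ : ((j + 1 + m).choose j : ℝ) ≠ 0 :=
      Nat.cast_ne_zero.2 (Nat.choose_pos (by omega)).ne'
    have hc₁ : ((j + 1 + m).choose (j + 1) : ℝ) ≠ 0 :=
      Nat.cast_ne_zero.2 (Nat.choose_pos (by omega)).ne'
    simp only [mul_div_assoc', neg_mul, neg_div, intervalIntegral.integral_neg,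
      intervalIntegral.integral_div, mul_assoc, intervalIntegral.integral_const_mul, ih (m + 1)]
    rw [show j + (m + 1) = j + 1 + m by omega]
    push_cast
    norm_num
    field_simp
    linear_combination ((j : ℝ) + m + 2) * hchoose

theorem one_sub_pow_mul_add_one_pow_le_integral {x : ℝ} (hx : x ∈ Set.Icc (-1 : ℝ) 1) (j m : ℕ) :
    (1 - x) ^ j * (x + 1) ^ m ≤
      (j + m + 1) / 2 * ∫ y in (-1 : ℝ)..1, (1 - y) ^ j * (y + 1) ^ m := by
  have hc : (0 : ℝ) < (j + m).choose j := by exact_mod_cast Nat.choose_pos (by omega)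
  have hbound :=
    choose_mul_pow_mul_pow_le_add_pow (sub_nonneg.2 hx.2) (neg_le_iff_add_nonneg.1 hx.1) j m
  rw [show 1 - x + (x + 1) = (2 : ℝ) by ring] at hbound
  rw [integral_one_sub_pow_mul_add_one_pow, pow_succ]
  field_simp
  linarith

section Lorentz

variable {d : ℕ} {A : ℕ → ℝ}

theorem sum_lorentz_nonneg (hA : ∀ j < d, 0 ≤ A j) {x : ℝ} (hx : x ∈ Set.Icc (-1 : ℝ) 1) :
    0 ≤ ∑ j ∈ range d, A j * (1 - x) ^ j * (x + 1) ^ (d - 1 - j) :=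
  sum_nonneg fun j hj => by
    have := hA j (mem_range.1 hj)
    have := sub_nonneg.2 hx.2
    have := neg_le_iff_add_nonneg.1 hx.1
    positivity

theorem sum_lorentz_le_integral (hA : ∀ j < d, 0 ≤ A j) {x : ℝ} (hx : x ∈ Set.Icc (-1 : ℝ) 1) :
    ∑ j ∈ range d, A j * (1 - x) ^ j * (x + 1) ^ (d - 1 - j) ≤
      d / 2 * ∫ y in (-1 : ℝ)..1, ∑ j ∈ range d, A j * (1 - y) ^ j * (y + 1) ^ (d - 1 - j) := by
  rw [intervalIntegral.integral_finsetSum fun j _ =>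
    Continuous.intervalIntegrable (by fun_prop) _ _, mul_sum]
  refine sum_le_sum fun j hj => ?_
  have hd : (d : ℝ) = j + (d - 1 - j : ℕ) + 1 := by
    have := mem_range.1 hj
    norm_cast
    omega
  have hterm := mul_le_mul_of_nonneg_left (one_sub_pow_mul_add_one_pow_le_integral hx j (d - 1 - j))
    (hA j (mem_range.1 hj))
  rw [← hd] at hterm
  simp only [mul_assoc, intervalIntegral.integral_const_mul]
  linarith

end Lorentz

theorem sub_le_two_mul_iSup_abs {g : ℝ → ℝ} (hg : Continuous g) {a b : ℝ} (hab : a ≤ b) :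
    g b - g a ≤ 2 * ⨆ x : Set.Icc a b, |g x| := by
  have hbdd : BddAbove (Set.range fun x : Set.Icc a b => |g x|) := by
    rw [Set.range_comp' (fun x => |g x|) Subtype.val, Subtype.range_coe]
    exact (isCompact_Icc.image (by fun_prop)).bddAbove
  have hb := (le_abs_self _).trans (le_ciSup hbdd ⟨b, Set.right_mem_Icc.2 hab⟩)
  have ha := (neg_le_abs _).trans (le_ciSup hbdd ⟨a, Set.left_mem_Icc.2 hab⟩)
  linarith

theorem markov_lorentz_derivative_general (d : ℕ)
    (f : Polynomial ℝ)
    (A : ℕ → ℝ) (hA : ∀ j ≤ d - 1, 0 ≤ A j)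
    (hf' : ∀ x : ℝ, f.derivative.eval x =
      ∑ j ∈ range d, A j * (1 - x) ^ j * (x + 1) ^ (d - 1 - j)) :
    (⨆ x : Set.Icc (-1 : ℝ) 1, |f.derivative.eval (x : ℝ)|) ≤
        ((d : ℝ) / 2) * (f.eval 1 - f.eval (-1)) ∧
      ((d : ℝ) / 2) * (f.eval 1 - f.eval (-1)) ≤
        (d : ℝ) * ⨆ x : Set.Icc (-1 : ℝ) 1, |f.eval (x : ℝ)| := by
  have hA' : ∀ j < d, 0 ≤ A j := fun j hj => hA j (by omega)
  have hftc : ∫ x in (-1 : ℝ)..1, f.derivative.eval x = f.eval 1 - f.eval (-1) :=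
    intervalIntegral.integral_eq_sub_of_hasDerivAt (fun x _ => f.hasDerivAt x)
      (f.derivative.continuous.intervalIntegrable _ _)
  have hderiv_le (x : ℝ) (hx : x ∈ Set.Icc (-1 : ℝ) 1) :
      f.derivative.eval x ≤ d / 2 * (f.eval 1 - f.eval (-1)) := by
    simp_rw [← hftc, hf']
    exact sum_lorentz_le_integral hA' hx
  have : Nonempty (Set.Icc (-1 : ℝ) 1) := ⟨⟨0, by norm_num⟩⟩
  refine ⟨ciSup_le fun x => ?_, ?_⟩
  · rw [abs_of_nonneg (hf' x ▸ sum_lorentz_nonneg hA' x.2)]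
    exact hderiv_le x x.2
  · calc (d : ℝ) / 2 * (f.eval 1 - f.eval (-1))
        ≤ d / 2 * (2 * ⨆ x : Set.Icc (-1 : ℝ) 1, |f.eval (x : ℝ)|) :=
          mul_le_mul_of_nonneg_left (sub_le_two_mul_iSup_abs f.continuous (by norm_num))
            (by positivity)
      _ = d * ⨆ x : Set.Icc (-1 : ℝ) 1, |f.eval (x : ℝ)| := by ring

theorem markov_lorentz_derivative (d : ℕ) (hd : 0 < d)
    (f : Polynomial ℝ) (hdeg : f.natDegree ≤ d)
    (A : ℕ → ℝ) (hA : ∀ j ≤ d - 1, 0 ≤ A j)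
    (hf' : ∀ x : ℝ, f.derivative.eval x =
      ∑ j ∈ range d, A j * (1 - x) ^ j * (x + 1) ^ (d - 1 - j)) :
    (⨆ x : Set.Icc (-1 : ℝ) 1, |f.derivative.eval (x : ℝ)|) ≤
        ((d : ℝ) / 2) * (f.eval 1 - f.eval (-1)) ∧
      ((d : ℝ) / 2) * (f.eval 1 - f.eval (-1)) ≤
        (d : ℝ) * ⨆ x : Set.Icc (-1 : ℝ) 1, |f.eval (x : ℝ)| :=
  markov_lorentz_derivative_general d f A hA hf'
end

section
/- Let n be a positive integer and let f be a real polynomial of degree at most n such that f' has no zeros in the open unit disk of ℂ. Then max_{x ∈ [-1,1]} |f'(x)| ≤ n · max_{x ∈ [-1,1]} |f(x)|. -/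
/-!
Write `g = f'` and `m = deg g`. Every root `z` of `g` has `|z| ≥ 1`, which makes each factor
`|t - z| / (1 - t)` nondecreasing on `[-1, 1)`; hence so is `|g(t)| / (1 - t) ^ m`. In particular
`g` has no zero in `(-1, 1)`, so up to a sign `g ≥ 0` on `[-1, 1]`, and integrating
`g(t) ≥ g(x) ((1 - t) / (1 - x)) ^ m` over `[x, 1]` gives `g(x) (1 - x) ≤ (m + 1) (f(1) - f(x))`.
Reflecting `t ↦ -t` gives `g(x) (1 + x) ≤ (m + 1) (f(x) - f(-1))`; adding the two,
`2 |g(x)| ≤ (m + 1) |f(1) - f(-1)| ≤ 2 n max_{[-1,1]} |f|`.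
-/

open Polynomial Set

theorem Complex.norm_ofReal_sub_mul_le {z : ℂ} (hz : 1 ≤ ‖z‖) {x t : ℝ} (hx : -1 ≤ x)
    (hxt : x ≤ t) (ht : t ≤ 1) : ‖(x : ℂ) - z‖ * (1 - t) ≤ ‖(t : ℂ) - z‖ * (1 - x) := by
  have hsq (y : ℝ) : ‖(y : ℂ) - z‖ ^ 2 = (y - z.re) ^ 2 + z.im ^ 2 := by
    rw [Complex.sq_norm, Complex.normSq_apply]
    simp only [Complex.sub_re, Complex.sub_im, Complex.ofReal_re, Complex.ofReal_im]
    ring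
  have hz2 : 1 ≤ z.re ^ 2 + z.im ^ 2 := by
    nlinarith [Complex.sq_norm z, Complex.normSq_apply z, norm_nonneg z]
  -- `|1 - z|² ≥ 2 (1 - re z)` and `(1 - x) + (1 - t) ≥ (1 - x) (1 - t)`
  have key : 2 * (1 - x) * (1 - t) * (1 - z.re) ≤ ((1 - z.re) ^ 2 + z.im ^ 2) * (2 - x - t) := by
    rcases le_total z.re 1 with hre | hre
    · have hxt1 : x * t ≤ 1 := by nlinarith
      nlinarith [mul_nonneg (sub_nonneg.2 hre) (sub_nonneg.2 hxt1)]
    · have hx1 : 0 ≤ 1 - x := by linarith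
      nlinarith [mul_nonneg (sub_nonneg.2 hre) (mul_nonneg (sub_nonneg.2 ht) hx1)]
  refine le_of_pow_le_pow_left₀ two_ne_zero (mul_nonneg (norm_nonneg _) (by linarith)) ?_
  rw [mul_pow, mul_pow, hsq, hsq]
  linear_combination (t - x) * key

theorem ContinuousOn.forall_nonneg_or_forall_nonpos {f : ℝ → ℝ} {a b : ℝ}
    (hf : ContinuousOn f (Icc a b)) (h0 : ∀ y ∈ Ioo a b, f y ≠ 0) :
    (∀ y ∈ Icc a b, 0 ≤ f y) ∨ ∀ y ∈ Icc a b, f y ≤ 0 := by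
  by_contra! h
  obtain ⟨⟨p, hp, hfp⟩, q, hq, hfq⟩ := h
  rcases le_total p q with hpq | hqp
  · obtain ⟨c, hc, hfc⟩ :=
      intermediate_value_Ioo hpq (hf.mono (Icc_subset_Icc hp.1 hq.2)) ⟨hfp, hfq⟩
    exact h0 c ⟨hp.1.trans_lt hc.1, hc.2.trans_le hq.2⟩ hfc
  · obtain ⟨c, hc, hfc⟩ :=
      intermediate_value_Ioo' hqp (hf.mono (Icc_subset_Icc hq.1 hp.2)) ⟨hfp, hfq⟩
    exact h0 c ⟨hq.1.trans_lt hc.1, hc.2.trans_le hp.2⟩ hfc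

namespace Polynomial

theorem abs_eval_mul_pow_eq_prod_aroots (g : ℝ[X]) (y c : ℝ) :
    |g.eval y| * c ^ g.natDegree =
      |g.leadingCoeff| * ((g.aroots ℂ).map fun z => ‖(y : ℂ) - z‖ * c).prod := by
  have hcard : (g.aroots ℂ).card = g.natDegree :=
    IsAlgClosed.card_roots_map_eq_natDegree_of_injective g (algebraMap ℝ ℂ).injective
  have hnorm (s : Multiset ℂ) : ‖s.prod‖ = (s.map (‖·‖)).prod :=
    map_multiset_prod (normHom : ℂ →*₀ ℝ) s
  have heval : ((g.eval y : ℝ) : ℂ) = aeval (y : ℂ) g := (aeval_ofReal g y).symm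
  rw [Multiset.prod_map_mul, Multiset.map_const', Multiset.prod_replicate, hcard, ← mul_assoc,
    ← Real.norm_eq_abs, ← Complex.norm_real, heval,
    (IsAlgClosed.splits _).aeval_eq_prod_aroots, norm_mul, hnorm]
  simp [Multiset.map_map]

theorem abs_eval_mul_one_sub_pow_le (g : ℝ[X]) (hroots : ∀ z : ℂ, aeval z g = 0 → 1 ≤ ‖z‖)
    {x t : ℝ} (hx : -1 ≤ x) (hxt : x ≤ t) (ht : t ≤ 1) :
    |g.eval x| * (1 - t) ^ g.natDegree ≤ |g.eval t| * (1 - x) ^ g.natDegree := by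
  rw [abs_eval_mul_pow_eq_prod_aroots, abs_eval_mul_pow_eq_prod_aroots]
  refine mul_le_mul_of_nonneg_left
    (Multiset.prod_map_le_prod_map₀ _ _ (fun z _ => ?_) fun z hz => ?_) (abs_nonneg _)
  · exact mul_nonneg (norm_nonneg _) (by linarith)
  · exact Complex.norm_ofReal_sub_mul_le (hroots z (mem_aroots.1 hz).2) hx hxt ht

theorem eval_ne_zero_of_abs_lt_one (g : ℝ[X]) (hroots : ∀ z : ℂ, aeval z g = 0 → 1 ≤ ‖z‖)
    {y : ℝ} (hy : |y| < 1) : g.eval y ≠ 0 := by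
  intro hgy
  have h1 := hroots y (by rw [← Complex.ofReal_zero, ← hgy]; exact aeval_ofReal g y)
  rw [Complex.norm_real, Real.norm_eq_abs] at h1
  linarith

theorem eval_nonneg_or_nonpos_on_Icc (g : ℝ[X]) (hroots : ∀ z : ℂ, aeval z g = 0 → 1 ≤ ‖z‖) :
    (∀ y ∈ Icc (-1 : ℝ) 1, 0 ≤ g.eval y) ∨ ∀ y ∈ Icc (-1 : ℝ) 1, g.eval y ≤ 0 :=
  g.continuousOn.forall_nonneg_or_forall_nonpos fun _ hy =>
    g.eval_ne_zero_of_abs_lt_one hroots (abs_lt.2 hy)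

theorem derivative_eval_mul_one_sub_le (f : ℝ[X])
    (hroots : ∀ z : ℂ, aeval z (derivative f) = 0 → 1 ≤ ‖z‖) {x : ℝ} (hx : x ∈ Icc (-1) 1)
    (hpos : ∀ t ∈ Icc x 1, 0 ≤ (derivative f).eval t) :
    (derivative f).eval x * (1 - x) ≤
      ((derivative f).natDegree + 1) * (f.eval 1 - f.eval x) := by
  set g := derivative f
  set m := g.natDegree
  rcases hx.2.eq_or_lt with rfl | hx1
  · simp
  set c : ℝ := (m + 1) * (1 - x) ^ m
  -- `ψ' ≥ 0` on `[x, 1]` is the bound `g(t) (1 - x) ^ m ≥ g(x) (1 - t) ^ m`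
  set ψ : ℝ → ℝ := fun t => c * f.eval t + g.eval x * (1 - t) ^ (m + 1)
  have hψ (t : ℝ) : HasDerivAt ψ (c * g.eval t - (m + 1) * g.eval x * (1 - t) ^ m) t := by
    refine (((f.hasDerivAt t).const_mul c).fun_add
      ((((hasDerivAt_id' t).const_sub 1).fun_pow (m + 1)).const_mul (g.eval x))).congr_deriv ?_
    rw [Nat.add_sub_cancel]
    push_cast
    ring
  have hmono : MonotoneOn ψ (Icc x 1) := by
    refine monotoneOn_of_hasDerivWithinAt_nonneg (convex_Icc x 1)
      (fun t _ => (hψ t).continuousAt.continuousWithinAt) (fun t _ => (hψ t).hasDerivWithinAt)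
      fun t ht => ?_
    rw [interior_Icc] at ht
    have hratio := abs_eval_mul_one_sub_pow_le g hroots hx.1 ht.1.le ht.2.le
    rw [abs_of_nonneg (hpos x (left_mem_Icc.2 hx1.le)),
      abs_of_nonneg (hpos t (Ioo_subset_Icc_self ht))] at hratio
    linear_combination mul_nonneg (by positivity : (0 : ℝ) ≤ m + 1) (sub_nonneg.2 hratio)
  have hψx := hmono (left_mem_Icc.2 hx1.le) (right_mem_Icc.2 hx1.le) hx1.le
  simp only [ψ, sub_self, zero_pow (Nat.succ_ne_zero m), mul_zero, add_zero] at hψx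
  refine le_of_mul_le_mul_left ?_ (pow_pos (sub_pos.2 hx1) m)
  linear_combination hψx

theorem derivative_eval_mul_one_add_le (f : ℝ[X])
    (hroots : ∀ z : ℂ, aeval z (derivative f) = 0 → 1 ≤ ‖z‖) {x : ℝ} (hx : x ∈ Icc (-1) 1)
    (hpos : ∀ t ∈ Icc (-1) x, 0 ≤ (derivative f).eval t) :
    (derivative f).eval x * (1 + x) ≤
      ((derivative f).natDegree + 1) * (f.eval x - f.eval (-1)) := by
  have hderiv : derivative (-f.comp (-X)) = (derivative f).comp (-X) := by
    simp [derivative_comp]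
  have h := derivative_eval_mul_one_sub_le (-f.comp (-X)) (x := -x)
    (by simpa [hderiv, aeval_comp] using fun z hz => hroots (-z) hz)
    ⟨by linarith [hx.2], by linarith [hx.1]⟩
    (fun t ht => by simpa [hderiv] using hpos (-t) ⟨by linarith [ht.2], by linarith [ht.1]⟩)
  rw [hderiv, natDegree_comp, natDegree_neg, natDegree_X, mul_one] at h
  simp only [eval_comp, eval_neg, eval_X, neg_neg] at h
  linarith

theorem two_mul_abs_derivative_eval_le (f : ℝ[X])
    (hroots : ∀ z : ℂ, aeval z (derivative f) = 0 → 1 ≤ ‖z‖) {x : ℝ} (hx : x ∈ Icc (-1) 1) :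
    2 * |(derivative f).eval x| ≤ f.natDegree * |f.eval 1 - f.eval (-1)| := by
  wlog hpos : ∀ t ∈ Icc (-1 : ℝ) 1, 0 ≤ (derivative f).eval t generalizing f
  · have hneg := ((derivative f).eval_nonneg_or_nonpos_on_Icc hroots).resolve_left hpos
    have h := this (-f) (by simpa using hroots) fun t ht => by simpa using hneg t ht
    rwa [derivative_neg, natDegree_neg, eval_neg, abs_neg, eval_neg, eval_neg, neg_sub_neg,
      abs_sub_comm] at h
  rcases eq_or_ne f.natDegree 0 with hf0 | hf0
  · obtain ⟨c, rfl⟩ := natDegree_eq_zero.1 hf0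
    simp
  have hdeg : ((derivative f).natDegree + 1 : ℝ) ≤ f.natDegree := by
    exact_mod_cast natDegree_derivative_lt hf0
  have hright := derivative_eval_mul_one_sub_le f hroots hx fun t ht =>
    hpos t ⟨hx.1.trans ht.1, ht.2⟩
  have hleft := derivative_eval_mul_one_add_le f hroots hx fun t ht =>
    hpos t ⟨ht.1, ht.2.trans hx.2⟩
  calc 2 * |(derivative f).eval x|
      = (derivative f).eval x * (1 - x) + (derivative f).eval x * (1 + x) := by
        rw [abs_of_nonneg (hpos x hx)]; ring
    _ ≤ ((derivative f).natDegree + 1) * (f.eval 1 - f.eval (-1)) := by linarith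
    _ ≤ ((derivative f).natDegree + 1) * |f.eval 1 - f.eval (-1)| := by
        gcongr; exact le_abs_self _
    _ ≤ f.natDegree * |f.eval 1 - f.eval (-1)| := by gcongr

end Polynomial

theorem markov_derivative_no_zeros_general (n : ℕ)
    (f : Polynomial ℝ) (hdeg : f.natDegree ≤ n)
    (hroots : ∀ z : ℂ, Polynomial.aeval z f.derivative = 0 → 1 ≤ ‖z‖) :
    (⨆ x : Set.Icc (-1 : ℝ) 1, |f.derivative.eval (x : ℝ)|) ≤
      (n : ℝ) * ⨆ x : Set.Icc (-1 : ℝ) 1, |f.eval (x : ℝ)| := by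
  have : Nonempty (Icc (-1 : ℝ) 1) := nonempty_Icc_subtype (by norm_num)
  set M := ⨆ x : Icc (-1 : ℝ) 1, |f.eval (x : ℝ)|
  have hbdd : BddAbove (range fun x : Icc (-1 : ℝ) 1 => |f.eval (x : ℝ)|) :=
    (isCompact_range (by fun_prop)).bddAbove
  have hM (y : ℝ) (hy : y ∈ Icc (-1 : ℝ) 1) : |f.eval y| ≤ M := le_ciSup hbdd ⟨y, hy⟩
  have hends : |f.eval 1 - f.eval (-1)| ≤ 2 * M := by
    linarith [abs_sub (f.eval 1) (f.eval (-1)), hM 1 (by norm_num), hM (-1) (by norm_num)]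
  refine ciSup_le fun x => ?_
  have hx := f.two_mul_abs_derivative_eval_le hroots x.2
  have hdegM : (f.natDegree : ℝ) * |f.eval 1 - f.eval (-1)| ≤ n * (2 * M) :=
    mul_le_mul (by exact_mod_cast hdeg) hends (abs_nonneg _) (Nat.cast_nonneg n)
  linarith

theorem markov_derivative_no_zeros (n : ℕ) (hn : 0 < n)
    (f : Polynomial ℝ) (hdeg : f.natDegree ≤ n)
    (hroots : ∀ z : ℂ, Polynomial.aeval z f.derivative = 0 → 1 ≤ ‖z‖) :
    (⨆ x : Set.Icc (-1 : ℝ) 1, |f.derivative.eval (x : ℝ)|) ≤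
      (n : ℝ) * ⨆ x : Set.Icc (-1 : ℝ) 1, |f.eval (x : ℝ)| :=
  markov_derivative_no_zeros_general n f hdeg hroots
end

section
/- Let n be a positive integer and let f be a real polynomial of degree at most n that is monotone on [-1,1] and whose complex zeros are all real and lie in ℝ \ (-1,1). Then max_{x ∈ [-1,1]} |f'(x)| ≤ (n/2) · max_{x ∈ [-1,1]} |f(x)|. -/
/-!
Write `f = c ∏ (X - r)` with all `r` real and `|r| ≥ 1`, and assume `f` nondecreasing. Then
`f' ≥ 0` on `[-1, 1]`, `f'` is again real-rooted (Rolle), and `f' / f = ∑ 1 / (x - r)` is strictly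
decreasing on `(-1, 1)`, so `f'` has no zero in `(-1, 1)`. For every zero `ρ` of `f'` the ratio
`|y - ρ| / (1 - y)` is nondecreasing and `|y - ρ| / (1 + y)` nonincreasing on `[-1, 1]`; with
`d = deg f' ≤ n - 1` this gives `f'(y) ≥ f'(x) ((1 - y) / (1 - x)) ^ d` for `y ≥ x` and
`f'(y) ≥ f'(x) ((1 + y) / (1 + x)) ^ d` for `y ≤ x`. Integrating over `[x, 1]` and `[-1, x]` and
adding yields `2 f'(x) ≤ (d + 1) (f(1) - f(-1))`. Finally `f(1) - f(-1) ≤ max |f(1)| |f(-1)|`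
because `f(1) f(-1) = c² ∏ (r² - 1) ≥ 0`.
-/

open Polynomial Set

section LinearOrderedField

variable {K : Type*} [Field K] [LinearOrder K] [IsStrictOrderedRing K]

theorem abs_sub_le_max_abs_of_mul_nonneg {a b : K} (h : 0 ≤ a * b) : |a - b| ≤ max |a| |b| := by
  rcases le_total 0 a with ha | ha <;> rcases le_total 0 b with hb | hb
  · rw [abs_of_nonneg ha, abs_of_nonneg hb, abs_sub_le_iff]
    constructor <;> linarith [le_max_left a b, le_max_right a b]
  · rw [abs_of_nonneg ha, abs_of_nonpos hb, abs_sub_le_iff]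
    constructor <;> nlinarith [le_max_left a (-b), le_max_right a (-b)]
  · rw [abs_of_nonpos ha, abs_of_nonneg hb, abs_sub_le_iff]
    constructor <;> nlinarith [le_max_left (-a) b, le_max_right (-a) b]
  · rw [abs_of_nonpos ha, abs_of_nonpos hb, abs_sub_le_iff]
    constructor <;> linarith [le_max_left (-a) (-b), le_max_right (-a) (-b)]

theorem Multiset.sum_map_one_div_sub_lt {s : Multiset K} (hs : s ≠ 0) {x y : K} (hxy : x < y)
    (h : ∀ r ∈ s, r < x ∨ y < r) :
    (s.map fun r => 1 / (y - r)).sum < (s.map fun r => 1 / (x - r)).sum := by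
  refine Multiset.sum_lt_sum_of_nonempty hs fun r hr => ?_
  rcases h r hr with hrx | hry
  · exact one_div_lt_one_div_of_lt (by linarith) (by linarith)
  · exact one_div_lt_one_div_of_neg_of_lt (by linarith) (by linarith)

theorem Multiset.pow_card_mul_prod_map_le {ι : Type*} {s : Multiset ι} {a b : K} {f g : ι → K}
    (ha : 0 ≤ a) (hf : ∀ i ∈ s, 0 ≤ f i) (h : ∀ i ∈ s, a * f i ≤ b * g i) :
    a ^ card s * (s.map f).prod ≤ b ^ card s * (s.map g).prod := by
  simp only [← Multiset.prod_replicate, ← Multiset.map_const', ← Multiset.prod_map_mul]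
  exact Multiset.prod_map_le_prod_map₀ _ _ (fun i hi => mul_nonneg ha (hf i hi)) h

theorem one_sub_mul_abs_sub_le {ρ x y : K} (hρ : 1 ≤ |ρ|) (hx : -1 ≤ x) (hxy : x ≤ y)
    (hy : y ≤ 1) : (1 - y) * |x - ρ| ≤ (1 - x) * |y - ρ| := by
  rcases le_abs'.1 hρ with hρ | hρ
  · rw [abs_of_nonneg (by linarith : 0 ≤ x - ρ), abs_of_nonneg (by linarith : 0 ≤ y - ρ)]
    nlinarith
  · rw [abs_of_nonpos (by linarith : x - ρ ≤ 0), abs_of_nonpos (by linarith : y - ρ ≤ 0)]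
    nlinarith

theorem one_add_mul_abs_sub_le {ρ x y : K} (hρ : 1 ≤ |ρ|) (hx : -1 ≤ x) (hxy : x ≤ y)
    (hy : y ≤ 1) : (1 + x) * |y - ρ| ≤ (1 + y) * |x - ρ| := by
  have := one_sub_mul_abs_sub_le (ρ := -ρ) (by rwa [abs_neg]) (neg_le_neg hy) (neg_le_neg hxy)
    (neg_le.1 hx)
  rwa [neg_sub_neg, neg_sub_neg, sub_neg_eq_add, sub_neg_eq_add, abs_sub_comm ρ,
    abs_sub_comm ρ] at this

end LinearOrderedField

theorem mul_sub_le_of_pow_mul_le_right {g g' : ℝ → ℝ} (hg : ∀ y, HasDerivAt g (g' y) y) {d : ℕ}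
    {x b : ℝ} (hxb : x ≤ b) (h : ∀ y ∈ Icc x b, (b - y) ^ d * g' x ≤ (b - x) ^ d * g' y) :
    g' x * (b - x) ≤ (d + 1) * (g b - g x) := by
  rcases hxb.eq_or_lt with rfl | hxb
  · simp
  -- the antiderivative form of integrating `g' y ≥ g' x ((b - y) / (b - x)) ^ d` over `[x, b]`
  set F : ℝ → ℝ := fun y => (d + 1) * (b - x) ^ d * g y + g' x * (b - y) ^ (d + 1)
  have hF : ∀ y, HasDerivAt F ((d + 1) * ((b - x) ^ d * g' y - (b - y) ^ d * g' x)) y := by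
    intro y
    have hpow : HasDerivAt (fun y => (b - y) ^ (d + 1)) (-((d + 1) * (b - y) ^ d)) y := by
      simpa using ((hasDerivAt_id' y).const_sub b).fun_pow (d + 1)
    exact (((hg y).const_mul _).fun_add (hpow.const_mul (g' x))).congr_deriv (by ring)
  have hFmono : MonotoneOn F (Icc x b) :=
    monotoneOn_of_hasDerivWithinAt_nonneg (convex_Icc x b)
      (fun y _ => (hF y).continuousAt.continuousWithinAt) (fun y _ => (hF y).hasDerivWithinAt)
      fun y hy => mul_nonneg (by positivity) (sub_nonneg.2 (h y (interior_subset hy)))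
  have hFxb := hFmono (left_mem_Icc.2 hxb.le) (right_mem_Icc.2 hxb.le) hxb.le
  simp only [F, sub_self, mul_zero, add_zero, pow_succ] at hFxb
  refine le_of_mul_le_mul_left ?_ (pow_pos (sub_pos.2 hxb) d)
  linarith

theorem mul_sub_le_of_pow_mul_le_left {g g' : ℝ → ℝ} (hg : ∀ y, HasDerivAt g (g' y) y) {d : ℕ}
    {a x : ℝ} (hax : a ≤ x) (h : ∀ y ∈ Icc a x, (y - a) ^ d * g' x ≤ (x - a) ^ d * g' y) :
    g' x * (x - a) ≤ (d + 1) * (g x - g a) := by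
  have hreflect : ∀ y, HasDerivAt (fun y => -g (-y)) (g' (-y)) y := fun y => by
    simpa using ((hg (-y)).comp y (hasDerivAt_neg' y)).fun_neg
  have := mul_sub_le_of_pow_mul_le_right hreflect (neg_le_neg hax) fun y hy => by
    simpa [sub_eq_add_neg, add_comm] using h (-y) ⟨le_neg.2 hy.2, neg_le.2 hy.1⟩
  simp only [neg_neg] at this
  linarith

namespace Polynomial

theorem splits_of_forall_complex_root_real {f : ℝ[X]} (h : ∀ z : ℂ, aeval z f = 0 → ∃ r : ℝ, z = r) :
    f.Splits := by
  refine (IsAlgClosed.splits (f.map (algebraMap ℝ ℂ))).of_splits_map _ fun z hz => ?_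
  obtain ⟨r, rfl⟩ := h z (by simpa [eval_map_algebraMap] using (mem_roots'.mp hz).2)
  exact ⟨r, rfl⟩

theorem Splits.derivative {p : ℝ[X]} (hp : p.Splits) : p.derivative.Splits := by
  rw [splits_iff_card_roots] at hp ⊢
  have := card_roots_le_derivative p
  have := card_roots' p.derivative
  have := natDegree_derivative_le p
  omega

theorem Splits.abs_eval_eq {p : ℝ[X]} (hp : p.Splits) (x : ℝ) :
    |p.eval x| = |p.leadingCoeff| * (p.roots.map fun r => |x - r|).prod := by
  rw [hp.eval_eq_prod_roots, abs_mul]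
  exact congrArg _ ((map_multiset_prod (absHom : ℝ →*₀ ℝ) _).trans (by rw [Multiset.map_map]; rfl))

theorem Splits.pow_mul_abs_eval_le {p : ℝ[X]} (hp : p.Splits) {a b x y : ℝ} (ha : 0 ≤ a)
    (h : ∀ r ∈ p.roots, a * |x - r| ≤ b * |y - r|) :
    a ^ p.natDegree * |p.eval x| ≤ b ^ p.natDegree * |p.eval y| := by
  rw [hp.abs_eval_eq, hp.abs_eval_eq, hp.natDegree_eq_card_roots, mul_left_comm,
    mul_left_comm (b ^ _)]
  exact mul_le_mul_of_nonneg_left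
    (Multiset.pow_card_mul_prod_map_le ha (fun _ _ => abs_nonneg _) h) (abs_nonneg _)

theorem Splits.eval_one_mul_eval_neg_one_nonneg {p : ℝ[X]} (hp : p.Splits)
    (hroots : ∀ r ∈ p.roots, 1 ≤ |r|) : 0 ≤ p.eval 1 * p.eval (-1) := by
  rw [hp.eval_eq_prod_roots, hp.eval_eq_prod_roots, mul_mul_mul_comm, ← Multiset.prod_map_mul]
  refine mul_nonneg (mul_self_nonneg _) (Multiset.prod_nonneg fun _ hc => ?_)
  obtain ⟨r, hr, rfl⟩ := Multiset.mem_map.1 hc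
  nlinarith [one_le_sq_iff_one_le_abs r |>.2 (hroots r hr)]

theorem eval_derivative_nonneg_of_monotoneOn {p : ℝ[X]} {a b x : ℝ} (hab : a < b)
    (hmono : MonotoneOn (fun x => p.eval x) (Icc a b)) (hx : x ∈ Icc a b) :
    0 ≤ p.derivative.eval x := by
  rw [← (p.hasDerivAt x).hasDerivWithinAt.derivWithin (uniqueDiffOn_Icc hab x hx)]
  exact hmono.derivWithin_nonneg

theorem one_le_abs_of_mem_roots_derivative {p : ℝ[X]} (hp : p.Splits)
    (hroots : ∀ r ∈ p.roots, 1 ≤ |r|) (hmono : MonotoneOn (fun x => p.eval x) (Icc (-1) 1))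
    {ρ : ℝ} (hρ : ρ ∈ p.derivative.roots) : 1 ≤ |ρ| := by
  by_contra! hρ1
  replace hρ1 : ρ ∈ Ioo (-1 : ℝ) 1 := abs_lt.1 hρ1
  obtain ⟨hq, hqρ⟩ := mem_roots'.1 hρ
  have hp0 : p ≠ 0 := by rintro rfl; simp at hq
  have hne : ∀ y ∈ Ioo (-1 : ℝ) 1, p.eval y ≠ 0 := fun y hy h =>
    (hroots y ((mem_roots hp0).2 h)).not_gt (abs_lt.2 hy)
  set S : ℝ → ℝ := fun y => (p.roots.map fun r => 1 / (y - r)).sum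
  have hS : ∀ y ∈ Ioo (-1 : ℝ) 1, p.derivative.eval y = p.eval y * S y := fun y hy =>
    hp.eval_derivative_eq_eval_mul_sum (hne y hy)
  have hSρ : S ρ = 0 := by
    have := hS ρ hρ1
    rw [hqρ.eq_zero, eq_comm, mul_eq_zero] at this
    exact this.resolve_left (hne ρ hρ1)
  have hSlt : ∀ x ∈ Ioo (-1 : ℝ) 1, ∀ y ∈ Ioo (-1 : ℝ) 1, x < y → S y < S x :=
    fun x hx y hy hxy => Multiset.sum_map_one_div_sub_lt
      (hp.roots_ne_zero fun h => hq (derivative_of_natDegree_zero h)) hxy fun r hr => by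
        rcases le_abs'.1 (hroots r hr) with hr | hr
        · exact Or.inl (by linarith [hx.1])
        · exact Or.inr (by linarith [hy.2])
  have hpS_nonneg : ∀ y ∈ Ioo (-1 : ℝ) 1, 0 ≤ p.eval y * S y := fun y hy =>
    hS y hy ▸ eval_derivative_nonneg_of_monotoneOn (by norm_num) hmono (Ioo_subset_Icc_self hy)
  -- `S = p' / p` changes sign at `ρ`, so `p` would have to change sign there too
  obtain ⟨y₁, hy₁, hy₁ρ⟩ : ∃ y ∈ Ioo (-1 : ℝ) 1, y < ρ :=
    ⟨(ρ - 1) / 2, ⟨by linarith [hρ1.1], by linarith [hρ1.2]⟩, by linarith [hρ1.1]⟩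
  obtain ⟨y₂, hy₂, hρy₂⟩ : ∃ y ∈ Ioo (-1 : ℝ) 1, ρ < y :=
    ⟨(ρ + 1) / 2, ⟨by linarith [hρ1.1], by linarith [hρ1.2]⟩, by linarith [hρ1.2]⟩
  have hp₁ : 0 < p.eval y₁ := (hne y₁ hy₁).symm.lt_of_le
    (nonneg_of_mul_nonneg_left (hpS_nonneg y₁ hy₁) (hSρ ▸ hSlt y₁ hy₁ ρ hρ1 hy₁ρ))
  have hp₂ : p.eval y₂ ≤ 0 :=
    nonpos_of_mul_nonneg_left (hpS_nonneg y₂ hy₂) (hSρ ▸ hSlt ρ hρ1 y₂ hy₂ hρy₂)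
  have := hmono (Ioo_subset_Icc_self hy₁) (Ioo_subset_Icc_self hy₂) (hy₁ρ.trans hρy₂).le
  linarith

theorem two_mul_eval_derivative_le_of_monotoneOn {p : ℝ[X]} (hp : p.Splits)
    (hroots : ∀ r ∈ p.roots, 1 ≤ |r|) (hmono : MonotoneOn (fun x => p.eval x) (Icc (-1) 1))
    {x : ℝ} (hx : x ∈ Icc (-1 : ℝ) 1) :
    2 * p.derivative.eval x ≤ p.natDegree * (p.eval 1 - p.eval (-1)) := by
  have hq0 : ∀ y ∈ Icc (-1 : ℝ) 1, 0 ≤ p.derivative.eval y := fun y hy =>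
    eval_derivative_nonneg_of_monotoneOn (by norm_num) hmono hy
  rcases eq_or_ne p.derivative 0 with hq | hq
  · rw [hq, eval_zero, mul_zero]
    exact mul_nonneg (Nat.cast_nonneg _)
      (sub_nonneg.2 (hmono (by norm_num) (by norm_num) (by norm_num)))
  have hqs := hp.derivative
  have hqroots : ∀ ρ ∈ p.derivative.roots, 1 ≤ |ρ| := fun ρ hρ =>
    one_le_abs_of_mem_roots_derivative hp hroots hmono hρ
  have hdeg : (p.natDegree : ℝ) = p.derivative.natDegree + 1 := by
    have : p.natDegree ≠ 0 := fun h => hq (derivative_of_natDegree_zero h)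
    rw [natDegree_derivative]
    norm_cast
    omega
  have hright := mul_sub_le_of_pow_mul_le_right (fun y => p.hasDerivAt y) hx.2 fun y hy => by
    have := hqs.pow_mul_abs_eval_le (sub_nonneg.2 hy.2) fun ρ hρ =>
      one_sub_mul_abs_sub_le (hqroots ρ hρ) hx.1 hy.1 hy.2
    rwa [abs_of_nonneg (hq0 x hx), abs_of_nonneg (hq0 y ⟨hx.1.trans hy.1, hy.2⟩)] at this
  have hleft := mul_sub_le_of_pow_mul_le_left (fun y => p.hasDerivAt y) hx.1 fun y hy => by
    have := hqs.pow_mul_abs_eval_le (by linarith [hy.1] : 0 ≤ 1 + y) fun ρ hρ =>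
      one_add_mul_abs_sub_le (hqroots ρ hρ) hy.1 hy.2 hx.2
    rwa [abs_of_nonneg (hq0 x hx), abs_of_nonneg (hq0 y ⟨hy.1, hy.2.trans hx.2⟩),
      add_comm 1, add_comm 1, ← sub_neg_eq_add, ← sub_neg_eq_add x] at this
  rw [hdeg]
  linarith

theorem two_mul_abs_eval_derivative_le {p : ℝ[X]} (hp : p.Splits)
    (hroots : ∀ r ∈ p.roots, 1 ≤ |r|)
    (hmono : MonotoneOn (fun x => p.eval x) (Icc (-1) 1) ∨
      AntitoneOn (fun x => p.eval x) (Icc (-1) 1))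
    {x : ℝ} (hx : x ∈ Icc (-1 : ℝ) 1) :
    2 * |p.derivative.eval x| ≤ p.natDegree * |p.eval 1 - p.eval (-1)| := by
  wlog hmono' : MonotoneOn (fun x => p.eval x) (Icc (-1) 1) generalizing p
  · have hneg : MonotoneOn (fun x => (-p).eval x) (Icc (-1) 1) := by
      simpa using (hmono.resolve_left hmono').neg
    have := this hp.neg (by rwa [roots_neg]) (Or.inl hneg) hneg
    rwa [derivative_neg, eval_neg, abs_neg, natDegree_neg, eval_neg, eval_neg, neg_sub_neg,
      abs_sub_comm] at this
  rw [abs_of_nonneg (eval_derivative_nonneg_of_monotoneOn (by norm_num) hmono' hx),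
    abs_of_nonneg (sub_nonneg.2 (hmono' (by norm_num) (by norm_num) (by norm_num)))]
  exact two_mul_eval_derivative_le_of_monotoneOn hp hroots hmono' hx

end Polynomial

theorem markov_monotone_real_zeros_general (n : ℕ)
    (f : Polynomial ℝ) (hdeg : f.natDegree ≤ n)
    (hmono : MonotoneOn (fun x => f.eval x) (Set.Icc (-1 : ℝ) 1) ∨
      AntitoneOn (fun x => f.eval x) (Set.Icc (-1 : ℝ) 1))
    (hroots : ∀ z : ℂ, Polynomial.aeval z f = 0 → ∃ r : ℝ, z = (r : ℂ) ∧ 1 ≤ |r|) :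
    (⨆ x : Set.Icc (-1 : ℝ) 1, |f.derivative.eval (x : ℝ)|) ≤
      ((n : ℝ) / 2) * ⨆ x : Set.Icc (-1 : ℝ) 1, |f.eval (x : ℝ)| := by
  have hsplit : f.Splits :=
    splits_of_forall_complex_root_real fun z hz => (hroots z hz).imp fun _ h => h.1
  have hfroots : ∀ r ∈ f.roots, 1 ≤ |r| := fun r hr => by
    obtain ⟨s, hs, hs1⟩ := hroots r (by
      rw [← Complex.coe_algebraMap, aeval_algebraMap_apply, coe_aeval_eq_eval,
        (mem_roots'.1 hr).2.eq_zero, map_zero])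
    rwa [Complex.ofReal_injective hs]
  have : Nonempty (Set.Icc (-1 : ℝ) 1) := ⟨⟨0, by norm_num, by norm_num⟩⟩
  have hbdd : BddAbove (Set.range fun x : Set.Icc (-1 : ℝ) 1 => |f.eval (x : ℝ)|) := by
    simpa only [Set.image_eq_range] using (isCompact_Icc.image f.continuous.abs).bddAbove
  refine ciSup_le fun x => ?_
  calc |f.derivative.eval (x : ℝ)| ≤ f.natDegree / 2 * |f.eval 1 - f.eval (-1)| := by
        linarith [two_mul_abs_eval_derivative_le hsplit hfroots hmono x.2]
    _ ≤ n / 2 * max |f.eval 1| |f.eval (-1)| := by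
        gcongr
        exact abs_sub_le_max_abs_of_mul_nonneg (hsplit.eval_one_mul_eval_neg_one_nonneg hfroots)
    _ ≤ n / 2 * ⨆ x : Set.Icc (-1 : ℝ) 1, |f.eval (x : ℝ)| := by
        gcongr
        exact max_le (le_ciSup hbdd ⟨1, by norm_num, by norm_num⟩)
          (le_ciSup hbdd ⟨-1, by norm_num, by norm_num⟩)

theorem markov_monotone_real_zeros (n : ℕ) (hn : 0 < n)
    (f : Polynomial ℝ) (hdeg : f.natDegree ≤ n)
    (hmono : MonotoneOn (fun x => f.eval x) (Set.Icc (-1 : ℝ) 1) ∨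
      AntitoneOn (fun x => f.eval x) (Set.Icc (-1 : ℝ) 1))
    (hroots : ∀ z : ℂ, Polynomial.aeval z f = 0 → ∃ r : ℝ, z = (r : ℂ) ∧ 1 ≤ |r|) :
    (⨆ x : Set.Icc (-1 : ℝ) 1, |f.derivative.eval (x : ℝ)|) ≤
      ((n : ℝ) / 2) * ⨆ x : Set.Icc (-1 : ℝ) 1, |f.eval (x : ℝ)| :=
  markov_monotone_real_zeros_general n f hdeg hmono hroots
end
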